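/- arXiv:1504.03099 — 5 statements merged into one kernel-verified Lean document; each statement's English description precedes it below -/
import Mathlib

section
/- Outer nose retraction, large last family: for positive integers with αₙ > 2α₁, Z(α₁, α₂, ..., α_{n-1}, αₙ) = Z(α₂, ..., α_{n-1}, α₁, αₙ − 2α₁). -/
/-- Upper-arc partner of point `k ∈ {1,…,2·sum}` in a meander whose upper arcs
form consecutive rainbow families of the given sizes (1-indexed points). -/
def upperPartner : List ℕ → ℕ → ℕ
  | [], k => k
  | a :: rest, k => if k ≤ 2 * a then 2 * a + 1 - k else 2 * a + upperPartner rest (k - 2 * a)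

/-- One step along the bi-rainbow meander: upper or lower partner. -/
def meanderRel (l : List ℕ) (x y : ℕ) : Prop :=
  y = upperPartner l x ∨ y = 2 * l.sum + 1 - x

/-- Connectivity relation on the points `{1,…,2α}` of the bi-rainbow meander `RM l`. -/
def meanderSetoid (l : List ℕ) : Setoid {k : ℕ // 1 ≤ k ∧ k ≤ 2 * l.sum} :=
  ⟨fun a b => Relation.EqvGen (fun a b => meanderRel l a.1 b.1) a b,
    Relation.EqvGen.is_equivalence _⟩

/-- Number of connected components (Jordan curves) of the bi-rainbow meander `RM l`. -/
noncomputable def Z (l : List ℕ) : ℕ := Nat.card (Quotient (meanderSetoid l))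

namespace BiRainbowAux

lemma upperPartner_cons (c : ℕ) (L : List ℕ) (k : ℕ) :
    upperPartner (c :: L) k =
      if k ≤ 2 * c then 2 * c + 1 - k else 2 * c + upperPartner L (k - 2 * c) := rfl

lemma upperPartner_prefix (L L' : List ℕ) :
    ∀ q, 1 ≤ q → q ≤ 2 * L.sum → upperPartner (L ++ L') q = upperPartner L q := by
  induction L with
  | nil => intro q h1 h2; simp only [List.sum_nil] at h2; omega
  | cons c L ih =>
      intro q h1 h2
      simp only [List.sum_cons] at h2
      rw [List.cons_append, upperPartner_cons, upperPartner_cons]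
      split
      · rfl
      · rename_i h
        rw [ih (q - 2*c) (by omega) (by omega)]

lemma upperPartner_append (L L' : List ℕ) :
    ∀ q, 1 ≤ q → upperPartner (L ++ L') (2 * L.sum + q) = 2 * L.sum + upperPartner L' q := by
  induction L with
  | nil => intro q h1; simp
  | cons c L ih =>
      intro q h1
      rw [List.cons_append, upperPartner_cons]
      rw [if_neg (by simp only [List.sum_cons]; omega)]
      have e : 2 * (c :: L).sum + q - 2*c = 2 * L.sum + q := by
        simp only [List.sum_cons]; omega
      rw [e, ih q h1]
      simp only [List.sum_cons]
      omega

lemma upperPartner_range (L : List ℕ) :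
    ∀ q, 1 ≤ q → q ≤ 2 * L.sum → 1 ≤ upperPartner L q ∧ upperPartner L q ≤ 2 * L.sum := by
  induction L with
  | nil => intro q h1 h2; simp only [List.sum_nil] at h2; omega
  | cons c L ih =>
      intro q h1 h2
      simp only [List.sum_cons] at h2 ⊢
      rw [upperPartner_cons]
      split
      · omega
      · rename_i h
        obtain ⟨hl, hr⟩ := ih (q - 2*c) (by omega) (by omega)
        omega

variable (a b : ℕ) (mid : List ℕ)

lemma sum1 : (a :: mid ++ [b]).sum = a + mid.sum + b := by
  simp [List.sum_append]; omega

lemma sum2 : (mid ++ [a, b - 2*a]).sum = mid.sum + a + (b - 2*a) := by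
  simp [List.sum_append]; omega

lemma l1up_left (x : ℕ) (h1 : 1 ≤ x) (h2 : x ≤ 2*a) :
    upperPartner (a :: mid ++ [b]) x = 2*a + 1 - x := by
  rw [List.cons_append, upperPartner_cons, if_pos h2]

lemma l1up_mid (q : ℕ) (h1 : 1 ≤ q) (h2 : q ≤ 2*mid.sum) :
    upperPartner (a :: mid ++ [b]) (2*a + q) = 2*a + upperPartner mid q := by
  rw [List.cons_append, upperPartner_cons, if_neg (by omega)]
  have e : 2*a + q - 2*a = q := by omega
  rw [e, upperPartner_prefix mid [b] q h1 h2]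

lemma l1up_right (t : ℕ) (h1 : 1 ≤ t) (h2 : t ≤ 2*b) :
    upperPartner (a :: mid ++ [b]) (2*a + 2*mid.sum + t) = 2*a + 2*mid.sum + (2*b + 1 - t) := by
  rw [List.cons_append, upperPartner_cons, if_neg (by omega)]
  have e : 2*a + 2*mid.sum + t - 2*a = 2*mid.sum + t := by omega
  rw [e, upperPartner_append mid [b] t h1]
  rw [upperPartner_cons, if_pos h2]
  omega

lemma l2up_mid (q : ℕ) (h1 : 1 ≤ q) (h2 : q ≤ 2*mid.sum) :
    upperPartner (mid ++ [a, b - 2*a]) q = upperPartner mid q :=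
  upperPartner_prefix mid _ q h1 h2

lemma l2up_a (t : ℕ) (h1 : 1 ≤ t) (h2 : t ≤ 2*a) :
    upperPartner (mid ++ [a, b - 2*a]) (2*mid.sum + t) = 2*mid.sum + (2*a + 1 - t) := by
  rw [upperPartner_append mid _ t h1, upperPartner_cons, if_pos h2]

lemma l2up_b (t : ℕ) (h1 : 1 ≤ t) (h2 : t ≤ 2*(b - 2*a)) :
    upperPartner (mid ++ [a, b - 2*a]) (2*mid.sum + (2*a + t))
      = 2*mid.sum + (2*a + (2*(b - 2*a) + 1 - t)) := by
  rw [upperPartner_append mid _ (2*a + t) (by omega), upperPartner_cons, if_neg (by omega)]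
  have e : 2*a + t - 2*a = t := by omega
  rw [e, upperPartner_cons, if_pos h2]

/-- The retraction map on point values. -/
def Ff (m p : ℕ) : ℕ :=
  if p ≤ 2*a then 2*m + p else if p ≤ 2*m + 2*b then p - 2*a else 2*a + 4*m + 2*b + 1 - p

lemma Ff_eq1 (m p : ℕ) (h : p ≤ 2*a) : Ff a b m p = 2*m + p := by
  simp only [Ff]; rw [if_pos h]

lemma Ff_eq2 (m p : ℕ) (h1 : 2*a < p) (h2 : p ≤ 2*m + 2*b) : Ff a b m p = p - 2*a := by
  simp only [Ff]; rw [if_neg (by omega), if_pos h2]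

lemma Ff_eq3 (m p : ℕ) (h : 2*m + 2*b < p) (hb : 2*a < b) :
    Ff a b m p = 2*a + 4*m + 2*b + 1 - p := by
  simp only [Ff]; rw [if_neg (by omega), if_neg (by omega)]

/-- Points of the meander. -/
def Pt (l : List ℕ) := {k : ℕ // 1 ≤ k ∧ k ≤ 2 * l.sum}

def Fb (hb : 2*a < b) (x : Pt (a :: mid ++ [b])) : Pt (mid ++ [a, b - 2*a]) :=
  ⟨Ff a b mid.sum x.1, by
    have h1 := x.2.1; have h2 := x.2.2
    have hs1 := sum1 a b mid; have hs2 := sum2 a b mid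
    simp only [Ff]; split_ifs <;> constructor <;> omega⟩

def Gb (hb : 2*a < b) (x : Pt (mid ++ [a, b - 2*a])) : Pt (a :: mid ++ [b]) :=
  ⟨x.1 + 2*a, by
    have h1 := x.2.1; have h2 := x.2.2
    have hs1 := sum1 a b mid; have hs2 := sum2 a b mid
    constructor <;> omega⟩

lemma Fb_val (hb : 2*a < b) (x : Pt (a :: mid ++ [b])) :
    (Fb a b mid hb x).1 = Ff a b mid.sum x.1 := rfl

lemma Gb_val (hb : 2*a < b) (x : Pt (mid ++ [a, b - 2*a])) :
    (Gb a b mid hb x).1 = x.1 + 2*a := rfl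

lemma rel_up {l : List ℕ} {u v : Pt l} (h : v.1 = upperPartner l u.1) :
    Relation.EqvGen (fun u v : Pt l => meanderRel l u.1 v.1) u v :=
  Relation.EqvGen.rel _ _ (Or.inl h)

lemma rel_low {l : List ℕ} {u v : Pt l} (h : v.1 = 2 * l.sum + 1 - u.1) :
    Relation.EqvGen (fun u v : Pt l => meanderRel l u.1 v.1) u v :=
  Relation.EqvGen.rel _ _ (Or.inr h)

lemma F_step (ha : 0 < a) (hb : 2*a < b)
    (x y : Pt (a :: mid ++ [b])) (h : meanderRel (a :: mid ++ [b]) x.1 y.1) :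
    Relation.EqvGen (fun u v : Pt (mid ++ [a, b - 2*a]) => meanderRel (mid ++ [a, b - 2*a]) u.1 v.1)
      (Fb a b mid hb x) (Fb a b mid hb y) := by
  have hp1 := x.2.1
  have hp2 := x.2.2
  have hq1 := y.2.1
  have hq2 := y.2.2
  have hs1 := sum1 a b mid
  have hs2 := sum2 a b mid
  replace hp2 : x.1 ≤ 2*(a + mid.sum + b) := by omega
  replace hq2 : y.1 ≤ 2*(a + mid.sum + b) := by omega
  rcases h with h | h
  · -- upper arc
    rcases le_or_gt x.1 (2*a) with c1 | c1
    · rw [l1up_left a b mid x.1 hp1 c1] at h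
      refine rel_up ?_
      rw [Fb_val, Fb_val, Ff_eq1 a b mid.sum x.1 c1, Ff_eq1 a b mid.sum y.1 (by omega),
        l2up_a a b mid x.1 hp1 c1]
      omega
    · rcases le_or_gt x.1 (2*a + 2*mid.sum) with c2 | c2
      · -- middle zone
        have hx : x.1 = 2*a + (x.1 - 2*a) := by omega
        rw [hx, l1up_mid a b mid (x.1 - 2*a) (by omega) (by omega)] at h
        obtain ⟨hu1, hu2⟩ := upperPartner_range mid (x.1 - 2*a) (by omega) (by omega)
        refine rel_up ?_
        rw [Fb_val, Fb_val, Ff_eq2 a b mid.sum x.1 c1 (by omega),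
          Ff_eq2 a b mid.sum y.1 (by omega) (by omega),
          l2up_mid a b mid (x.1 - 2*a) (by omega) (by omega)]
        omega
      · -- last family
        have hx : x.1 = 2*a + 2*mid.sum + (x.1 - 2*a - 2*mid.sum) := by omega
        rw [hx, l1up_right a b mid (x.1 - 2*a - 2*mid.sum) (by omega) (by omega)] at h
        rcases le_or_gt x.1 (4*a + 2*mid.sum) with c3 | c3
        · have he : Fb a b mid hb x = Fb a b mid hb y := by
            apply Subtype.ext
            rw [Fb_val, Fb_val, Ff_eq2 a b mid.sum x.1 (by omega) (by omega),
              Ff_eq3 a b mid.sum y.1 (by omega) hb]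
            omega
          rw [he]
          exact Relation.EqvGen.refl _
        · rcases le_or_gt x.1 (2*mid.sum + 2*b) with c4 | c4
          · refine rel_up ?_
            rw [Fb_val, Fb_val, Ff_eq2 a b mid.sum x.1 (by omega) (by omega),
              Ff_eq2 a b mid.sum y.1 (by omega) (by omega)]
            have hx2 : x.1 - 2*a = 2*mid.sum + (2*a + (x.1 - 4*a - 2*mid.sum)) := by omega
            rw [hx2, l2up_b a b mid (x.1 - 4*a - 2*mid.sum) (by omega) (by omega)]
            omega
          · have he : Fb a b mid hb x = Fb a b mid hb y := by
              apply Subtype.ext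
              rw [Fb_val, Fb_val, Ff_eq3 a b mid.sum x.1 (by omega) hb,
                Ff_eq2 a b mid.sum y.1 (by omega) (by omega)]
              omega
            rw [he]
            exact Relation.EqvGen.refl _
  · -- lower arc
    replace h : y.1 = 2*(a + mid.sum + b) + 1 - x.1 := by omega
    rcases le_or_gt x.1 (2*a) with c1 | c1
    · have he : Fb a b mid hb x = Fb a b mid hb y := by
        apply Subtype.ext
        rw [Fb_val, Fb_val, Ff_eq1 a b mid.sum x.1 c1,
          Ff_eq3 a b mid.sum y.1 (by omega) hb]
        omega
      rw [he]
      exact Relation.EqvGen.refl _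
    · rcases le_or_gt x.1 (2*mid.sum + 2*b) with c2 | c2
      · refine rel_low ?_
        rw [Fb_val, Fb_val, Ff_eq2 a b mid.sum x.1 c1 c2,
          Ff_eq2 a b mid.sum y.1 (by omega) (by omega)]
        omega
      · have he : Fb a b mid hb x = Fb a b mid hb y := by
          apply Subtype.ext
          rw [Fb_val, Fb_val, Ff_eq3 a b mid.sum x.1 c2 hb,
            Ff_eq1 a b mid.sum y.1 (by omega)]
          omega
        rw [he]
        exact Relation.EqvGen.refl _

lemma G_step (ha : 0 < a) (hb : 2*a < b)
    (x y : Pt (mid ++ [a, b - 2*a])) (h : meanderRel (mid ++ [a, b - 2*a]) x.1 y.1) :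
    Relation.EqvGen (fun u v : Pt (a :: mid ++ [b]) => meanderRel (a :: mid ++ [b]) u.1 v.1)
      (Gb a b mid hb x) (Gb a b mid hb y) := by
  have hp1 := x.2.1
  have hp2 := x.2.2
  have hq1 := y.2.1
  have hq2 := y.2.2
  have hs1 := sum1 a b mid
  have hs2 := sum2 a b mid
  replace hp2 : x.1 ≤ 2*(mid.sum + a + (b - 2*a)) := by omega
  replace hq2 : y.1 ≤ 2*(mid.sum + a + (b - 2*a)) := by omega
  rcases h with h | h
  · -- upper arc
    rcases le_or_gt x.1 (2*mid.sum) with c1 | c1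
    · rw [l2up_mid a b mid x.1 hp1 c1] at h
      obtain ⟨hu1, hu2⟩ := upperPartner_range mid x.1 hp1 c1
      refine rel_up ?_
      rw [Gb_val, Gb_val]
      have e : x.1 + 2*a = 2*a + x.1 := by omega
      rw [e, l1up_mid a b mid x.1 hp1 c1]
      omega
    · rcases le_or_gt x.1 (2*mid.sum + 2*a) with c2 | c2
      · -- the 5-step chain through the retracted nose
        have hx : x.1 = 2*mid.sum + (x.1 - 2*mid.sum) := by omega
        rw [hx, l2up_a a b mid (x.1 - 2*mid.sum) (by omega) (by omega)] at h
        refine Relation.EqvGen.trans _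
          (⟨2*a + 2*mid.sum + 2*b + 1 - (x.1 - 2*mid.sum), by constructor <;> omega⟩ :
            Pt (a :: mid ++ [b])) _ (rel_up ?_) ?_
        · show 2*a + 2*mid.sum + 2*b + 1 - (x.1 - 2*mid.sum)
            = upperPartner (a :: mid ++ [b]) (x.1 + 2*a)
          have e : x.1 + 2*a = 2*a + 2*mid.sum + (x.1 - 2*mid.sum) := by omega
          rw [e, l1up_right a b mid (x.1 - 2*mid.sum) (by omega) (by omega)]
          omega
        refine Relation.EqvGen.trans _
          (⟨x.1 - 2*mid.sum, by constructor <;> omega⟩ : Pt (a :: mid ++ [b])) _ (rel_low ?_) ?_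
        · show x.1 - 2*mid.sum = 2 * (a :: mid ++ [b]).sum + 1
            - (2*a + 2*mid.sum + 2*b + 1 - (x.1 - 2*mid.sum))
          omega
        refine Relation.EqvGen.trans _
          (⟨2*a + 1 - (x.1 - 2*mid.sum), by constructor <;> omega⟩ :
            Pt (a :: mid ++ [b])) _ (rel_up ?_) ?_
        · show 2*a + 1 - (x.1 - 2*mid.sum) = upperPartner (a :: mid ++ [b]) (x.1 - 2*mid.sum)
          rw [l1up_left a b mid (x.1 - 2*mid.sum) (by omega) (by omega)]
        refine Relation.EqvGen.trans _
          (⟨2*mid.sum + 2*b + (x.1 - 2*mid.sum), by constructor <;> omega⟩ :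
            Pt (a :: mid ++ [b])) _ (rel_low ?_) (rel_up ?_)
        · show 2*mid.sum + 2*b + (x.1 - 2*mid.sum) = 2 * (a :: mid ++ [b]).sum + 1
            - (2*a + 1 - (x.1 - 2*mid.sum))
          omega
        · show (Gb a b mid hb y).1
            = upperPartner (a :: mid ++ [b]) (2*mid.sum + 2*b + (x.1 - 2*mid.sum))
          have e : 2*mid.sum + 2*b + (x.1 - 2*mid.sum)
              = 2*a + 2*mid.sum + (2*b + (x.1 - 2*mid.sum) - 2*a) := by omega
          rw [Gb_val, e, l1up_right a b mid _ (by omega) (by omega)]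
          omega
      · -- inside the shrunken big family
        have hx : x.1 = 2*mid.sum + (2*a + (x.1 - 2*mid.sum - 2*a)) := by omega
        rw [hx, l2up_b a b mid (x.1 - 2*mid.sum - 2*a) (by omega) (by omega)] at h
        refine rel_up ?_
        rw [Gb_val, Gb_val]
        have e : x.1 + 2*a = 2*a + 2*mid.sum + (x.1 - 2*mid.sum) := by omega
        rw [e, l1up_right a b mid (x.1 - 2*mid.sum) (by omega) (by omega)]
        omega
  · -- lower arc
    refine rel_low ?_
    rw [Gb_val, Gb_val]
    omega

lemma FG (hb : 2*a < b) (x : Pt (mid ++ [a, b - 2*a])) :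
    Fb a b mid hb (Gb a b mid hb x) = x := by
  apply Subtype.ext
  have h1 := x.2.1
  have h2 := x.2.2
  have hs2 := sum2 a b mid
  replace h2 : x.1 ≤ 2*(mid.sum + a + (b - 2*a)) := by omega
  rw [Fb_val, Gb_val, Ff_eq2 a b mid.sum (x.1 + 2*a) (by omega) (by omega)]
  omega

lemma GF (ha : 0 < a) (hb : 2*a < b) (x : Pt (a :: mid ++ [b])) :
    Relation.EqvGen (fun u v : Pt (a :: mid ++ [b]) => meanderRel (a :: mid ++ [b]) u.1 v.1)
      (Gb a b mid hb (Fb a b mid hb x)) x := by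
  have hp1 := x.2.1
  have hp2 := x.2.2
  have hs1 := sum1 a b mid
  replace hp2 : x.1 ≤ 2*(a + mid.sum + b) := by omega
  rcases le_or_gt x.1 (2*a) with c1 | c1
  · apply Relation.EqvGen.symm
    refine Relation.EqvGen.trans _
      (⟨2*(a + mid.sum + b) + 1 - x.1, by constructor <;> omega⟩ :
        Pt (a :: mid ++ [b])) _ (rel_low ?_) (rel_up ?_)
    · show 2*(a + mid.sum + b) + 1 - x.1 = 2 * (a :: mid ++ [b]).sum + 1 - x.1
      omega
    · show (Gb a b mid hb (Fb a b mid hb x)).1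
        = upperPartner (a :: mid ++ [b]) (2*(a + mid.sum + b) + 1 - x.1)
      have e : 2*(a + mid.sum + b) + 1 - x.1 = 2*a + 2*mid.sum + (2*b + 1 - x.1) := by omega
      rw [Gb_val, Fb_val, e, l1up_right a b mid (2*b + 1 - x.1) (by omega) (by omega),
        Ff_eq1 a b mid.sum x.1 c1]
      omega
  · rcases le_or_gt x.1 (2*mid.sum + 2*b) with c2 | c2
    · have he : Gb a b mid hb (Fb a b mid hb x) = x := by
        apply Subtype.ext
        rw [Gb_val, Fb_val, Ff_eq2 a b mid.sum x.1 c1 c2]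
        omega
      rw [he]
      exact Relation.EqvGen.refl _
    · apply Relation.EqvGen.symm
      refine rel_up ?_
      show (Gb a b mid hb (Fb a b mid hb x)).1 = upperPartner (a :: mid ++ [b]) x.1
      have e : x.1 = 2*a + 2*mid.sum + (x.1 - 2*a - 2*mid.sum) := by omega
      conv_rhs => rw [e]
      rw [l1up_right a b mid (x.1 - 2*a - 2*mid.sum) (by omega) (by omega),
        Gb_val, Fb_val, Ff_eq3 a b mid.sum x.1 c2 hb]
      omega

lemma eqvgen_lift {α β : Type*} {r : α → α → Prop} {s : β → β → Prop} (f : α → β)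
    (hf : ∀ x y, r x y → Relation.EqvGen s (f x) (f y)) :
    ∀ x y, Relation.EqvGen r x y → Relation.EqvGen s (f x) (f y) := by
  intro x y h
  induction h with
  | rel u v huv => exact hf u v huv
  | refl u => exact Relation.EqvGen.refl _
  | symm u v _ ih => exact Relation.EqvGen.symm _ _ ih
  | trans u v w _ _ ih1 ih2 => exact Relation.EqvGen.trans _ _ _ ih1 ih2

end BiRainbowAux

/-- Outer nose retraction, large last family: if αₙ > 2α₁, then
Z(α₁,α₂,…,α_{n-1},αₙ) = Z(α₂,…,α_{n-1},α₁,αₙ−2α₁). -/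
theorem outer_retraction_large (a b : ℕ) (ha : 0 < a) (hb : 2 * a < b) (mid : List ℕ)
    (hpos : ∀ x ∈ mid, 0 < x) :
    Z (a :: mid ++ [b]) = Z (mid ++ [a, b - 2 * a]) := by
  unfold Z
  apply Nat.card_congr
  refine
    { toFun := Quotient.lift
        (fun x => Quotient.mk (meanderSetoid (mid ++ [a, b - 2*a])) (BiRainbowAux.Fb a b mid hb x))
        (fun x y h => Quotient.sound
          (BiRainbowAux.eqvgen_lift _ (BiRainbowAux.F_step a b mid ha hb) x y h))
      invFun := Quotient.lift
        (fun x => Quotient.mk (meanderSetoid (a :: mid ++ [b])) (BiRainbowAux.Gb a b mid hb x))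
        (fun x y h => Quotient.sound
          (BiRainbowAux.eqvgen_lift _ (BiRainbowAux.G_step a b mid ha hb) x y h))
      left_inv := fun q => Quotient.inductionOn q
        (fun x => Quotient.sound (BiRainbowAux.GF a b mid ha hb x))
      right_inv := fun q => Quotient.inductionOn q
        (fun x => congrArg _ (BiRainbowAux.FG a b mid hb x)) }
end

section
/- Outer nose retraction, intermediate case: for positive integers with α₁ < αₙ < 2α₁, Z(α₁, α₂, ..., α_{n-1}, αₙ) = Z(2α₁ − αₙ, α₂, ..., α_{n-1}, α₁). -/
namespace OuterNose

abbrev P (l : List ℕ) := {k : ℕ // 1 ≤ k ∧ k ≤ 2 * l.sum}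

def E (l : List ℕ) (x y : P l) : Prop :=
  Relation.EqvGen (fun a b => meanderRel l a.1 b.1) x y

lemma E.rfl {l} {x : P l} : E l x x := Relation.EqvGen.refl x
lemma E.symm {l} {x y : P l} (h : E l x y) : E l y x := Relation.EqvGen.symm x y h
lemma E.trans {l} {x y z : P l} (h1 : E l x y) (h2 : E l y z) : E l x z :=
  Relation.EqvGen.trans x y z h1 h2
lemma E.of_eq {l} {x y : P l} (h : x.1 = y.1) : E l x y := by
  have : x = y := Subtype.ext h
  rw [this]; exact E.rfl
lemma E.mk_of_eq {l} {v w : ℕ} {hv : 1 ≤ v ∧ v ≤ 2*l.sum} {hw : 1 ≤ w ∧ w ≤ 2*l.sum}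
    (h : v = w) : E l ⟨v, hv⟩ ⟨w, hw⟩ := E.of_eq h

lemma E.stepU {l} {x y : P l} (h : y.1 = upperPartner l x.1) : E l x y :=
  Relation.EqvGen.rel x y (Or.inl h)
lemma E.stepL {l} {x y : P l} (h : y.1 = 2 * l.sum + 1 - x.1) : E l x y :=
  Relation.EqvGen.rel x y (Or.inr h)

lemma up_cons_le (a : ℕ) (rest : List ℕ) (k : ℕ) (h : k ≤ 2*a) :
    upperPartner (a :: rest) k = 2*a+1-k := by simp [upperPartner, h]

lemma up_cons_gt (a : ℕ) (rest : List ℕ) (k : ℕ) (h : ¬ k ≤ 2*a) :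
    upperPartner (a :: rest) k = 2*a + upperPartner rest (k - 2*a) := by simp [upperPartner, h]

lemma up_range : ∀ (l : List ℕ) (k : ℕ), 1 ≤ k → k ≤ 2*l.sum →
    1 ≤ upperPartner l k ∧ upperPartner l k ≤ 2*l.sum
  | [], k, h1, h2 => by simp only [upperPartner, List.sum_nil] at *; omega
  | a :: rest, k, h1, h2 => by
    simp only [List.sum_cons] at h2 ⊢
    by_cases h : k ≤ 2*a
    · rw [up_cons_le a rest k h]; omega
    · rw [up_cons_gt a rest k h]
      have := up_range rest (k - 2*a) (by omega) (by omega)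
      omega

lemma up_append_left : ∀ (mid : List ℕ) (e k : ℕ), 1 ≤ k → k ≤ 2*mid.sum →
    upperPartner (mid ++ [e]) k = upperPartner mid k
  | [], e, k, h1, h2 => by simp only [List.sum_nil] at h2; omega
  | a :: rest, e, k, h1, h2 => by
    simp only [List.sum_cons] at h2
    by_cases h : k ≤ 2*a
    · rw [List.cons_append, up_cons_le _ _ _ h, up_cons_le _ _ _ h]
    · rw [List.cons_append, up_cons_gt _ _ _ h, up_cons_gt _ _ _ h,
        up_append_left rest e (k-2*a) (by omega) (by omega)]

lemma up_append_right : ∀ (mid : List ℕ) (e k : ℕ), 2*mid.sum < k → k ≤ 2*mid.sum + 2*e →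
    upperPartner (mid ++ [e]) k = 2*mid.sum + (2*e + 1 - (k - 2*mid.sum))
  | [], e, k, h1, h2 => by
    simp only [List.nil_append, List.sum_nil] at *
    rw [up_cons_le e [] k (by omega)]
    omega
  | a :: rest, e, k, h1, h2 => by
    simp only [List.sum_cons] at h1 h2 ⊢
    have ha : ¬ k ≤ 2*a := by omega
    rw [List.cons_append, up_cons_gt _ _ _ ha,
        up_append_right rest e (k-2*a) (by omega) (by omega)]
    omega

lemma sumL (p q : ℕ) (mid : List ℕ) : (p :: mid ++ [q]).sum = p + mid.sum + q := by
  simp [List.sum_append]; omega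

lemma upL_low (p q k : ℕ) (mid : List ℕ) (h : k ≤ 2*p) :
    upperPartner (p :: mid ++ [q]) k = 2*p+1-k := by
  rw [List.cons_append]; exact up_cons_le _ _ _ h

lemma upL_mid (p q k : ℕ) (mid : List ℕ) (h1 : 2*p < k) (h2 : k ≤ 2*p + 2*mid.sum) :
    upperPartner (p :: mid ++ [q]) k = 2*p + upperPartner mid (k - 2*p) := by
  rw [List.cons_append, up_cons_gt _ _ _ (by omega),
    up_append_left mid q (k-2*p) (by omega) (by omega)]

lemma upL_high (p q k : ℕ) (mid : List ℕ) (h1 : 2*p + 2*mid.sum < k)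
    (h2 : k ≤ 2*(p+mid.sum+q)) :
    upperPartner (p :: mid ++ [q]) k = 4*p + 4*mid.sum + 2*q + 1 - k := by
  rw [List.cons_append, up_cons_gt _ _ _ (by omega),
    up_append_right mid q (k-2*p) (by omega) (by omega)]
  omega


-- "virtual arc" of the last family, acting near the left end:
-- u ~ 2q+1-u for 1 ≤ u ≤ 2q, via lower arc, last-family upper arc, lower arc.
lemma eVA (p q u : ℕ) (mid : List ℕ) (h1 : 1 ≤ u) (h2 : u ≤ 2*q)
    (hu : 1 ≤ u ∧ u ≤ 2 * (p :: mid ++ [q]).sum)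
    (hv : 1 ≤ 2*q+1-u ∧ 2*q+1-u ≤ 2 * (p :: mid ++ [q]).sum) :
    E (p :: mid ++ [q]) ⟨u, hu⟩ ⟨2*q+1-u, hv⟩ := by
  have hs : (p :: mid ++ [q]).sum = p + mid.sum + q := sumL p q mid
  have m1 : 1 ≤ 2*(p :: mid ++ [q]).sum + 1 - u ∧
      2*(p :: mid ++ [q]).sum + 1 - u ≤ 2 * (p :: mid ++ [q]).sum := by omega
  have m2 : 1 ≤ 2*p+2*mid.sum+u ∧ 2*p+2*mid.sum+u ≤ 2 * (p :: mid ++ [q]).sum := by omega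
  refine E.trans (E.stepL (y := ⟨2*(p :: mid ++ [q]).sum + 1 - u, m1⟩) rfl) ?_
  refine E.trans (E.stepU (y := ⟨2*p+2*mid.sum+u, m2⟩) ?_) (E.stepL ?_)
  · show 2*p+2*mid.sum+u = upperPartner (p :: mid ++ [q]) (2*(p :: mid ++ [q]).sum + 1 - u)
    rw [upL_high p q _ mid (by omega) (by omega)]
    omega
  · show 2*q+1-u = 2*(p :: mid ++ [q]).sum + 1 - (2*p+2*mid.sum+u)
    omega

-- shift by 2(q-p) within the left region
lemma eSH1 (p q u : ℕ) (mid : List ℕ) (hpq : p ≤ q) (h1 : 2*(q-p) < u) (h2 : u ≤ 2*q)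
    (hu : 1 ≤ u ∧ u ≤ 2 * (p :: mid ++ [q]).sum)
    (hv : 1 ≤ u - 2*(q-p) ∧ u - 2*(q-p) ≤ 2 * (p :: mid ++ [q]).sum) :
    E (p :: mid ++ [q]) ⟨u, hu⟩ ⟨u - 2*(q-p), hv⟩ := by
  have hs : (p :: mid ++ [q]).sum = p + mid.sum + q := sumL p q mid
  have m1 : 1 ≤ 2*q+1-u ∧ 2*q+1-u ≤ 2 * (p :: mid ++ [q]).sum := by omega
  refine E.trans (eVA p q u mid (by omega) h2 hu m1) (E.stepU ?_)
  show u - 2*(q-p) = upperPartner (p :: mid ++ [q]) (2*q+1-u)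
  rw [upL_low p q _ mid (by omega)]
  omega

-- shift by 2(q-p) within the last-family region
lemma eSH2 (p q z : ℕ) (mid : List ℕ) (hpq : p ≤ q) (h1 : 2*(p+mid.sum) + 2*(q-p) < z)
    (h2 : z ≤ 2*(p+mid.sum+q))
    (hu : 1 ≤ z ∧ z ≤ 2 * (p :: mid ++ [q]).sum)
    (hv : 1 ≤ z - 2*(q-p) ∧ z - 2*(q-p) ≤ 2 * (p :: mid ++ [q]).sum) :
    E (p :: mid ++ [q]) ⟨z, hu⟩ ⟨z - 2*(q-p), hv⟩ := by
  have hs : (p :: mid ++ [q]).sum = p + mid.sum + q := sumL p q mid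
  have m1 : 1 ≤ 2*(p+mid.sum+q)+1-z ∧ 2*(p+mid.sum+q)+1-z ≤ 2 * (p :: mid ++ [q]).sum := by
    omega
  have m2 : 1 ≤ 2*(p+mid.sum+q)+1-z+2*(q-p) ∧
      2*(p+mid.sum+q)+1-z+2*(q-p) ≤ 2 * (p :: mid ++ [q]).sum := by omega
  have m3 : 1 ≤ 2*(p+mid.sum+q)+1-z+2*(q-p) - 2*(q-p) ∧
      2*(p+mid.sum+q)+1-z+2*(q-p) - 2*(q-p) ≤ 2 * (p :: mid ++ [q]).sum := by omega
  have step1 : E (p :: mid ++ [q]) ⟨z, hu⟩ ⟨2*(p+mid.sum+q)+1-z, m1⟩ :=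
    E.stepL (by show 2*(p+mid.sum+q)+1-z = 2*(p :: mid ++ [q]).sum + 1 - z; omega)
  have step2 : E (p :: mid ++ [q]) ⟨2*(p+mid.sum+q)+1-z+2*(q-p), m2⟩
      ⟨2*(p+mid.sum+q)+1-z, m1⟩ := by
    refine E.trans (eSH1 p q _ mid hpq (by omega) (by omega) m2 m3) (E.of_eq ?_)
    show 2*(p+mid.sum+q)+1-z+2*(q-p) - 2*(q-p) = 2*(p+mid.sum+q)+1-z
    omega
  have step3 : E (p :: mid ++ [q]) ⟨z - 2*(q-p), hv⟩
      ⟨2*(p+mid.sum+q)+1-z+2*(q-p), m2⟩ :=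
    E.stepL (by show 2*(p+mid.sum+q)+1-z+2*(q-p)
        = 2*(p :: mid ++ [q]).sum + 1 - (z - 2*(q-p)); omega)
  exact step1.trans (step2.symm.trans step3.symm)

/-- retraction on points: `l1 = (c+d)::mid++[c+2d]` → `l2 = c::mid++[c+d]`. -/
def gval (c d m x : ℕ) : ℕ :=
  if x ≤ 2*d then 2*(c+d)+1-x else if x ≤ 4*c+2*m+4*d then x - 2*d else x - (2*m+2*c+4*d)

lemma gval_lo (c m : ℕ) {d x : ℕ} (h : x ≤ 2*d) : gval c d m x = 2*(c+d)+1-x := if_pos h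

lemma gval_md (c m : ℕ) {d x : ℕ} (h1 : ¬ x ≤ 2*d) (h2 : x ≤ 4*c+2*m+4*d) :
    gval c d m x = x - 2*d := by unfold gval; rw [if_neg h1, if_pos h2]

lemma gval_hi (c m : ℕ) {d x : ℕ} (h1 : ¬ x ≤ 4*c+2*m+4*d) :
    gval c d m x = x - (2*m+2*c+4*d) := by unfold gval; rw [if_neg (by omega), if_neg h1]

/-- nose-region chain in `l2`. -/
lemma helper_e (c d : ℕ) (mid : List ℕ) (hc : 1 ≤ c) (hd : 1 ≤ d) (x : ℕ)
    (h1 : 2*(c+d)+2*mid.sum < x) (h2 : x ≤ 2*c+2*mid.sum+4*d)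
    (hu : 1 ≤ x-2*d ∧ x-2*d ≤ 2 * (c :: mid ++ [c+d]).sum)
    (hv : 1 ≤ 4*c+2*mid.sum+4*d+1-x ∧
      4*c+2*mid.sum+4*d+1-x ≤ 2 * (c :: mid ++ [c+d]).sum) :
    E (c :: mid ++ [c+d]) ⟨x-2*d, hu⟩ ⟨4*c+2*mid.sum+4*d+1-x, hv⟩ := by
  have hs2 : (c :: mid ++ [c+d]).sum = c + mid.sum + (c+d) := sumL _ _ _
  have m1 : 1 ≤ 6*c+4*mid.sum+4*d+1-x ∧
      6*c+4*mid.sum+4*d+1-x ≤ 2 * (c :: mid ++ [c+d]).sum := by omega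
  have m2 : 1 ≤ x-(2*c+2*mid.sum+2*d) ∧
      x-(2*c+2*mid.sum+2*d) ≤ 2 * (c :: mid ++ [c+d]).sum := by omega
  refine E.trans (E.stepU (y := ⟨6*c+4*mid.sum+4*d+1-x, m1⟩) ?_) ?_
  · show 6*c+4*mid.sum+4*d+1-x = upperPartner (c :: mid ++ [c+d]) (x-2*d)
    rw [upL_high c (c+d) (x-2*d) mid (by omega) (by omega)]
    omega
  refine E.trans (E.stepL (y := ⟨x-(2*c+2*mid.sum+2*d), m2⟩) ?_) ?_
  · show x-(2*c+2*mid.sum+2*d) = 2 * (c :: mid ++ [c+d]).sum + 1 - (6*c+4*mid.sum+4*d+1-x)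
    omega
  refine E.trans (eVA c (c+d) (x-(2*c+2*mid.sum+2*d)) mid (by omega) (by omega) m2
    ⟨by omega, by omega⟩) (E.mk_of_eq ?_)
  show 2*(c+d)+1-(x-(2*c+2*mid.sum+2*d)) = 4*c+2*mid.sum+4*d+1-x
  omega

/-- the retraction `gval` maps meander steps of `l1` to connectivity in `l2`. -/
lemma mainB (c d x y : ℕ) (mid : List ℕ) (hc : 1 ≤ c) (hd : 1 ≤ d)
    (hx : 1 ≤ x ∧ x ≤ 2*((c+d) :: mid ++ [c+2*d]).sum)
    (hy : 1 ≤ y ∧ y ≤ 2*((c+d) :: mid ++ [c+2*d]).sum)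
    (h : meanderRel ((c+d) :: mid ++ [c+2*d]) x y)
    (hgx : 1 ≤ gval c d mid.sum x ∧ gval c d mid.sum x ≤ 2*(c :: mid ++ [c+d]).sum)
    (hgy : 1 ≤ gval c d mid.sum y ∧ gval c d mid.sum y ≤ 2*(c :: mid ++ [c+d]).sum) :
    E (c :: mid ++ [c+d]) ⟨gval c d mid.sum x, hgx⟩ ⟨gval c d mid.sum y, hgy⟩ := by
  have hs1 : ((c+d) :: mid ++ [c+2*d]).sum = (c+d) + mid.sum + (c+2*d) := sumL _ _ _
  have hs2 : (c :: mid ++ [c+d]).sum = c + mid.sum + (c+d) := sumL _ _ _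
  rcases h with hU | hL
  · by_cases hA : x ≤ 2*(c+d)
    · rw [upL_low (c+d) (c+2*d) x mid hA] at hU
      by_cases hx2 : x ≤ 2*d
      · by_cases hy2 : y ≤ 2*d
        · -- both in the nose zone: virtual arc
          refine E.trans (E.mk_of_eq (w := 2*(c+d)+1-x) (hw := ⟨by omega, by omega⟩) (gval_lo c mid.sum hx2))
            (E.trans (eVA c (c+d) (2*(c+d)+1-x) mid (by omega) (by omega) _
              ⟨by omega, by omega⟩) (E.mk_of_eq ?_))
          show 2*(c+d)+1-(2*(c+d)+1-x) = gval c d mid.sum y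
          rw [gval_lo c mid.sum hy2]; omega
        · refine E.trans (E.mk_of_eq (w := y) (hw := ⟨by omega, by omega⟩) ?_)
            (E.trans (eSH1 c (c+d) y mid (by omega) (by omega) (by omega) _
              ⟨by omega, by omega⟩) (E.mk_of_eq ?_))
          · rw [gval_lo c mid.sum hx2]; omega
          · rw [gval_md c mid.sum hy2 (by omega)]; omega
      · by_cases hy2 : y ≤ 2*d
        · refine E.trans (E.mk_of_eq (w := x - 2*((c+d)-c)) (hw := ⟨by omega, by omega⟩) ?_)
            (E.trans (E.symm (eSH1 c (c+d) x mid (by omega) (by omega) (by omega)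
              ⟨by omega, by omega⟩ _)) (E.mk_of_eq ?_))
          · rw [gval_md c mid.sum hx2 (by omega)]; omega
          · rw [gval_lo c mid.sum hy2]; omega
        · -- both interior: real arc in l2 followed by a shift
          have ht : 1 ≤ 2*c+1-(x-2*d) ∧ 2*c+1-(x-2*d) ≤ 2*(c :: mid ++ [c+d]).sum := by omega
          refine E.trans (E.stepU (y := ⟨2*c+1-(x-2*d), ht⟩) ?_) ?_
          · show 2*c+1-(x-2*d) = upperPartner (c :: mid ++ [c+d]) (gval c d mid.sum x)
            rw [gval_md c mid.sum hx2 (by omega), upL_low c (c+d) (x-2*d) mid (by omega)]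
          · refine E.trans (eSH1 c (c+d) (2*c+1-(x-2*d)) mid (by omega) (by omega)
              (by omega) ht ⟨by omega, by omega⟩) (E.mk_of_eq ?_)
            rw [gval_md c mid.sum hy2 (by omega)]; omega
    · by_cases hB : x ≤ 2*(c+d) + 2*mid.sum
      · rw [upL_mid (c+d) (c+2*d) x mid (by omega) hB] at hU
        have hrange := up_range mid (x - 2*(c+d)) (by omega) (by omega)
        refine E.stepU ?_
        show gval c d mid.sum y = upperPartner (c :: mid ++ [c+d]) (gval c d mid.sum x)
        rw [gval_md c mid.sum (by omega) (by omega), gval_md c mid.sum (by omega) (by omega),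
          upL_mid c (c+d) (x-2*d) mid (by omega) (by omega)]
        have harg : x - 2*d - 2*c = x - 2*(c+d) := by omega
        rw [harg]
        omega
      · rw [upL_high (c+d) (c+2*d) x mid (by omega) (by omega)] at hU
        by_cases he : x ≤ 2*c+2*mid.sum+4*d
        · refine E.trans (E.mk_of_eq (w := x-2*d) (hw := ⟨by omega, by omega⟩)
              (gval_md c mid.sum (by omega) (by omega)))
            (E.trans (helper_e c d mid hc hd x (by omega) he _ ⟨by omega, by omega⟩)
              (E.mk_of_eq ?_))
          rw [gval_hi c mid.sum (by omega)]; omega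
        · by_cases hf : x ≤ 4*c+2*mid.sum+4*d
          · -- both interior, last family
            have hw : 1 ≤ 6*c+4*mid.sum+4*d+1-x ∧
                6*c+4*mid.sum+4*d+1-x ≤ 2*(c :: mid ++ [c+d]).sum := by omega
            refine E.trans (E.stepU (y := ⟨6*c+4*mid.sum+4*d+1-x, hw⟩) ?_) (E.symm ?_)
            · show 6*c+4*mid.sum+4*d+1-x = upperPartner (c :: mid ++ [c+d]) (gval c d mid.sum x)
              rw [gval_md c mid.sum (by omega) (by omega), upL_high c (c+d) (x-2*d) mid (by omega)
                (by omega)]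
              omega
            · refine E.trans (E.mk_of_eq (w := 6*c+4*mid.sum+6*d+1-x) (hw := ⟨by omega, by omega⟩) ?_)
                (E.trans (eSH2 c (c+d) (6*c+4*mid.sum+6*d+1-x) mid (by omega) (by omega)
                  (by omega) _ ⟨by omega, by omega⟩) (E.mk_of_eq ?_))
              · rw [gval_md c mid.sum (by omega) (by omega)]; omega
              · omega
          · -- x in the top nose zone: symmetric to case `he` applied at y
            have h1y : 2*(c+d)+2*mid.sum < y := by omega
            have h2y : y ≤ 2*c+2*mid.sum+4*d := by omega
            refine E.symm (E.trans (E.mk_of_eq (w := y-2*d) (hw := ⟨by omega, by omega⟩)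
                (gval_md c mid.sum (by omega) (by omega)))
              (E.trans (helper_e c d mid hc hd y h1y h2y _ ⟨by omega, by omega⟩)
                (E.mk_of_eq ?_)))
            rw [gval_hi c mid.sum (by omega)]; omega
  · -- lower arc
    by_cases hx2 : x ≤ 2*d
    · refine E.mk_of_eq ?_
      rw [gval_lo c mid.sum hx2, gval_hi c mid.sum (by omega)]; omega
    · by_cases hx3 : x ≤ 4*c+2*mid.sum+4*d
      · refine E.stepL ?_
        show gval c d mid.sum y = 2*(c :: mid ++ [c+d]).sum + 1 - gval c d mid.sum x
        rw [gval_md c mid.sum hx2 hx3, gval_md c mid.sum (by omega) (by omega)]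
        omega
      · refine E.mk_of_eq ?_
        rw [gval_hi c mid.sum hx3, gval_lo c mid.sum (by omega)]; omega

/-- the embedding `x ↦ x+2d` maps meander steps of `l2` to connectivity in `l1`. -/
lemma mainC (c d x y : ℕ) (mid : List ℕ) (hc : 1 ≤ c) (hd : 1 ≤ d)
    (hx : 1 ≤ x ∧ x ≤ 2*(c :: mid ++ [c+d]).sum)
    (hy : 1 ≤ y ∧ y ≤ 2*(c :: mid ++ [c+d]).sum)
    (h : meanderRel (c :: mid ++ [c+d]) x y)
    (hfx : 1 ≤ x+2*d ∧ x+2*d ≤ 2*((c+d) :: mid ++ [c+2*d]).sum)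
    (hfy : 1 ≤ y+2*d ∧ y+2*d ≤ 2*((c+d) :: mid ++ [c+2*d]).sum) :
    E ((c+d) :: mid ++ [c+2*d]) ⟨x+2*d, hfx⟩ ⟨y+2*d, hfy⟩ := by
  have hs1 : ((c+d) :: mid ++ [c+2*d]).sum = (c+d) + mid.sum + (c+2*d) := sumL _ _ _
  have hs2 : (c :: mid ++ [c+d]).sum = c + mid.sum + (c+d) := sumL _ _ _
  rcases h with hU | hL
  · by_cases hA : x ≤ 2*c
    · rw [upL_low c (c+d) x mid hA] at hU
      refine E.trans (eVA (c+d) (c+2*d) (x+2*d) mid (by omega) (by omega) hfx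
        ⟨by omega, by omega⟩) (E.mk_of_eq ?_)
      omega
    · by_cases hB : x ≤ 2*c + 2*mid.sum
      · rw [upL_mid c (c+d) x mid (by omega) hB] at hU
        refine E.stepU ?_
        show y + 2*d = upperPartner ((c+d) :: mid ++ [c+2*d]) (x+2*d)
        rw [upL_mid (c+d) (c+2*d) (x+2*d) mid (by omega) (by omega)]
        have harg : x + 2*d - 2*(c+d) = x - 2*c := by omega
        rw [harg]
        omega
      · rw [upL_high c (c+d) x mid (by omega) (by omega)] at hU
        have hz : 1 ≤ 6*c+4*mid.sum+6*d+1-x ∧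
            6*c+4*mid.sum+6*d+1-x ≤ 2*((c+d) :: mid ++ [c+2*d]).sum := by omega
        refine E.trans (E.stepU (y := ⟨6*c+4*mid.sum+6*d+1-x, hz⟩) ?_) ?_
        · show 6*c+4*mid.sum+6*d+1-x = upperPartner ((c+d) :: mid ++ [c+2*d]) (x+2*d)
          rw [upL_high (c+d) (c+2*d) (x+2*d) mid (by omega) (by omega)]
          omega
        · refine E.trans (eSH2 (c+d) (c+2*d) (6*c+4*mid.sum+6*d+1-x) mid (by omega)
            (by omega) (by omega) hz ⟨by omega, by omega⟩) (E.mk_of_eq ?_)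
          omega
  · refine E.stepL ?_
    show y + 2*d = 2*((c+d) :: mid ++ [c+2*d]).sum + 1 - (x+2*d)
    omega

/-- every point of `l1` is connected to the image of its retraction. -/
lemma mainD (c d x : ℕ) (mid : List ℕ) (hc : 1 ≤ c) (hd : 1 ≤ d)
    (hx : 1 ≤ x ∧ x ≤ 2*((c+d) :: mid ++ [c+2*d]).sum)
    (hm : 1 ≤ gval c d mid.sum x + 2*d ∧
      gval c d mid.sum x + 2*d ≤ 2*((c+d) :: mid ++ [c+2*d]).sum) :
    E ((c+d) :: mid ++ [c+2*d]) ⟨x, hx⟩ ⟨gval c d mid.sum x + 2*d, hm⟩ := by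
  have hs1 : ((c+d) :: mid ++ [c+2*d]).sum = (c+d) + mid.sum + (c+2*d) := sumL _ _ _
  by_cases hx2 : x ≤ 2*d
  · refine E.trans (eVA (c+d) (c+2*d) x mid (by omega) (by omega) hx
      ⟨by omega, by omega⟩) (E.mk_of_eq ?_)
    rw [gval_lo c mid.sum hx2]; omega
  · by_cases hx3 : x ≤ 4*c+2*mid.sum+4*d
    · refine E.mk_of_eq ?_
      rw [gval_md c mid.sum hx2 hx3]; omega
    · have hz : 1 ≤ 6*c+4*mid.sum+8*d+1-x ∧
          6*c+4*mid.sum+8*d+1-x ≤ 2*((c+d) :: mid ++ [c+2*d]).sum := by omega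
      refine E.trans (E.stepU (y := ⟨6*c+4*mid.sum+8*d+1-x, hz⟩) ?_)
        (E.trans (E.stepL (y := ⟨x-(2*c+2*mid.sum+2*d), ⟨by omega, by omega⟩⟩) ?_)
          (E.mk_of_eq ?_))
      · show 6*c+4*mid.sum+8*d+1-x = upperPartner ((c+d) :: mid ++ [c+2*d]) x
        rw [upL_high (c+d) (c+2*d) x mid (by omega) (by omega)]
        omega
      · show x-(2*c+2*mid.sum+2*d)
          = 2*((c+d) :: mid ++ [c+2*d]).sum + 1 - (6*c+4*mid.sum+8*d+1-x)
        omega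
      · rw [gval_hi c mid.sum hx3]; omega

lemma gvf (c d x m : ℕ) (h1 : 1 ≤ x) (h2 : x ≤ 4*c+2*m+2*d) (hd : 1 ≤ d) :
    gval c d m (x + 2*d) = x := by
  unfold gval; split_ifs <;> omega

def gp (c d : ℕ) (mid : List ℕ) (x : P ((c+d) :: mid ++ [c+2*d])) :
    P (c :: mid ++ [c+d]) :=
  ⟨gval c d mid.sum x.1, by
    have hs1 : ((c+d) :: mid ++ [c+2*d]).sum = (c+d) + mid.sum + (c+2*d) := sumL _ _ _
    have hs2 : (c :: mid ++ [c+d]).sum = c + mid.sum + (c+d) := sumL _ _ _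
    have := x.2
    unfold gval; split_ifs <;> omega⟩

def fp (c d : ℕ) (mid : List ℕ) (x : P (c :: mid ++ [c+d])) :
    P ((c+d) :: mid ++ [c+2*d]) :=
  ⟨x.1 + 2*d, by
    have hs1 : ((c+d) :: mid ++ [c+2*d]).sum = (c+d) + mid.sum + (c+2*d) := sumL _ _ _
    have hs2 : (c :: mid ++ [c+d]).sum = c + mid.sum + (c+d) := sumL _ _ _
    have := x.2
    omega⟩

noncomputable def downQ (c d : ℕ) (mid : List ℕ) (hc : 1 ≤ c) (hd : 1 ≤ d) :
    Quotient (meanderSetoid ((c+d) :: mid ++ [c+2*d])) →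
      Quotient (meanderSetoid (c :: mid ++ [c+d])) :=
  Quotient.lift (fun x => (⟦gp c d mid x⟧ : Quotient (meanderSetoid (c :: mid ++ [c+d]))))
    (by
      intro a b hab
      apply Quotient.sound
      show E _ _ _
      induction hab with
      | rel x y hxy =>
        exact mainB c d x.1 y.1 mid hc hd x.2 y.2 hxy (gp c d mid x).2 (gp c d mid y).2
      | refl x => exact E.rfl
      | symm x y _ ih => exact E.symm ih
      | trans x y z _ _ ih1 ih2 => exact E.trans ih1 ih2)

noncomputable def upQ (c d : ℕ) (mid : List ℕ) (hc : 1 ≤ c) (hd : 1 ≤ d) :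
    Quotient (meanderSetoid (c :: mid ++ [c+d])) →
      Quotient (meanderSetoid ((c+d) :: mid ++ [c+2*d])) :=
  Quotient.lift (fun x => (⟦fp c d mid x⟧ :
      Quotient (meanderSetoid ((c+d) :: mid ++ [c+2*d]))))
    (by
      intro a b hab
      apply Quotient.sound
      show E _ _ _
      induction hab with
      | rel x y hxy =>
        exact mainC c d x.1 y.1 mid hc hd x.2 y.2 hxy (fp c d mid x).2 (fp c d mid y).2
      | refl x => exact E.rfl
      | symm x y _ ih => exact E.symm ih
      | trans x y z _ _ ih1 ih2 => exact E.trans ih1 ih2)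

lemma Zeq (c d : ℕ) (mid : List ℕ) (hc : 1 ≤ c) (hd : 1 ≤ d) :
    Z ((c+d) :: mid ++ [c+2*d]) = Z (c :: mid ++ [c+d]) := by
  refine Nat.card_congr ⟨downQ c d mid hc hd, upQ c d mid hc hd, ?_, ?_⟩
  · intro q
    induction q using Quotient.ind with
    | _ x =>
      show (⟦fp c d mid (gp c d mid x)⟧ :
        Quotient (meanderSetoid ((c+d) :: mid ++ [c+2*d]))) = ⟦x⟧
      refine Quotient.sound ?_
      show E _ _ _
      exact E.symm (mainD c d x.1 mid hc hd x.2 (fp c d mid (gp c d mid x)).2)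
  · intro q
    induction q using Quotient.ind with
    | _ x =>
      show (⟦gp c d mid (fp c d mid x)⟧ :
        Quotient (meanderSetoid (c :: mid ++ [c+d]))) = ⟦x⟧
      refine Quotient.sound ?_
      show E _ _ _
      refine E.of_eq ?_
      show gval c d mid.sum (x.1 + 2*d) = x.1
      have hs2 : (c :: mid ++ [c+d]).sum = c + mid.sum + (c+d) := sumL _ _ _
      have := x.2
      exact gvf c d x.1 mid.sum (by omega) (by omega) hd

end OuterNose


/-- Outer nose retraction, intermediate case: if α₁ < αₙ < 2α₁, then
Z(α₁,α₂,…,α_{n-1},αₙ) = Z(2α₁−αₙ,α₂,…,α_{n-1},α₁). -/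
theorem outer_retraction_intermediate (a b : ℕ) (hab : a < b) (hba : b < 2 * a)
    (mid : List ℕ) (hpos : ∀ x ∈ mid, 0 < x) :
    Z (a :: mid ++ [b]) = Z ((2 * a - b) :: mid ++ [a]) := by
  obtain ⟨c, d, hc, hd, ha, hb, hr⟩ :
      ∃ c d, 1 ≤ c ∧ 1 ≤ d ∧ a = c + d ∧ b = c + 2*d ∧ 2*a - b = c :=
    ⟨2*a - b, b - a, by omega, by omega, by omega, by omega, by omega⟩
  rw [hr, ha, hb]
  exact OuterNose.Zeq c d mid hc hd
end

section
/- Inner nose retraction, balanced case: let RM(α₁,...,αₙ) be a bi-rainbow meander with α = Σα_ℓ, and let m be an index with α₁+...+α_{m-1} = α_{m+1}+...+αₙ (the arcs left and right of family m are equal in number). Then Z(α₁,...,αₙ) = Z(α₁,...,α_{m-1}, α_{m+1},...,αₙ) + α_m. -/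
lemma upperPartner_mem (l : List ℕ) (x : ℕ) (h1 : 1 ≤ x) (h2 : x ≤ 2 * l.sum) :
    1 ≤ upperPartner l x ∧ upperPartner l x ≤ 2 * l.sum := by
  induction l generalizing x with
  | nil => simp at h2; omega
  | cons a t ih =>
    simp only [upperPartner, List.sum_cons] at *
    by_cases h : x ≤ 2 * a
    · simp only [h, if_true]; omega
    · simp only [h, if_false]
      have := ih (x - 2 * a) (by omega) (by omega)
      omega

lemma upperPartner_append_low (l r : List ℕ) (x : ℕ) (h1 : 1 ≤ x) (h2 : x ≤ 2 * l.sum) :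
    upperPartner (l ++ r) x = upperPartner l x := by
  induction l generalizing x with
  | nil => simp at h2; omega
  | cons a t ih =>
    simp only [List.cons_append, upperPartner, List.sum_cons] at *
    by_cases h : x ≤ 2 * a
    · simp [h]
    · simp only [h, if_false]
      show 2 * a + upperPartner (t ++ r) (x - 2*a) = _
      rw [ih (x - 2 * a) (by omega) (by omega)]

lemma upperPartner_append_high (l r : List ℕ) (x : ℕ) (h : 2 * l.sum < x) :
    upperPartner (l ++ r) x = 2 * l.sum + upperPartner r (x - 2 * l.sum) := by
  induction l generalizing x with
  | nil => simp
  | cons a t ih =>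
    simp only [List.cons_append, upperPartner, List.sum_cons] at *
    have h' : ¬ x ≤ 2 * a := by omega
    simp only [h', if_false]
    show 2 * a + upperPartner (t ++ r) (x - 2*a) = _
    rw [ih (x - 2 * a) (by omega)]
    have e : x - 2 * a - 2 * t.sum = x - 2 * (a + t.sum) := by omega
    rw [e]; omega

lemma sum_big (l1 l2 : List ℕ) (m : ℕ) : (l1 ++ m :: l2).sum = l1.sum + m + l2.sum := by
  simp [List.sum_append]; omega

lemma sum_small (l1 l2 : List ℕ) : (l1 ++ l2).sum = l1.sum + l2.sum := by
  simp [List.sum_append]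

/-- Map from big meander points to (small quotient) ⊕ (middle-arc index). -/
def bigToSum (l1 l2 : List ℕ) (m : ℕ)
    (x : {k : ℕ // 1 ≤ k ∧ k ≤ 2 * (l1 ++ m :: l2).sum}) :
    Quotient (meanderSetoid (l1 ++ l2)) ⊕ Fin m :=
  if h : x.1 ≤ 2 * l1.sum then
    Sum.inl (Quotient.mk (meanderSetoid (l1 ++ l2))
      ⟨x.1, x.2.1, by have := sum_small l1 l2; omega⟩)
  else if h2 : x.1 ≤ 2 * l1.sum + 2 * m then
    Sum.inr ⟨min (x.1 - 2 * l1.sum - 1) (2 * m - (x.1 - 2 * l1.sum)), by omega⟩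
  else
    Sum.inl (Quotient.mk (meanderSetoid (l1 ++ l2))
      ⟨x.1 - 2 * m, by
        have h1 := x.2.1; have h3 := x.2.2
        have := sum_small l1 l2; have := sum_big l1 l2 m; omega⟩)

/-- Embed a small meander point into the big meander, skipping the middle family. -/
def embedS (l1 l2 : List ℕ) (m : ℕ)
    (s : {k : ℕ // 1 ≤ k ∧ k ≤ 2 * (l1 ++ l2).sum}) :
    {k : ℕ // 1 ≤ k ∧ k ≤ 2 * (l1 ++ m :: l2).sum} :=
  if h : s.1 ≤ 2 * l1.sum then
    ⟨s.1, s.2.1, by have := sum_big l1 l2 m; omega⟩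
  else
    ⟨s.1 + 2 * m, by
      have h1 := s.2.1; have h3 := s.2.2
      have := sum_small l1 l2; have := sum_big l1 l2 m; omega⟩

lemma up_big_mid (l1 l2 : List ℕ) (m x : ℕ) (h1 : 2 * l1.sum < x)
    (h2 : x ≤ 2 * l1.sum + 2 * m) :
    upperPartner (l1 ++ m :: l2) x = 2 * l1.sum + (2 * m + 1 - (x - 2 * l1.sum)) := by
  rw [upperPartner_append_high l1 (m :: l2) x h1]
  simp only [upperPartner]
  rw [if_pos (by omega)]

lemma up_big_high (l1 l2 : List ℕ) (m x : ℕ) (h : 2 * l1.sum + 2 * m < x) :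
    upperPartner (l1 ++ m :: l2) x
      = 2 * l1.sum + 2 * m + upperPartner l2 (x - (2 * l1.sum + 2 * m)) := by
  have e : l1 ++ m :: l2 = (l1 ++ [m]) ++ l2 := by simp
  have hs : (l1 ++ [m]).sum = l1.sum + m := by simp
  rw [e, upperPartner_append_high (l1 ++ [m]) l2 x (by rw [hs]; omega), hs]
  have e2 : x - 2 * (l1.sum + m) = x - (2 * l1.sum + 2 * m) := by omega
  rw [e2]; omega

lemma bigToSum_rel (l1 l2 : List ℕ) (m : ℕ) (hbal : l1.sum = l2.sum)
    (a b : {k : ℕ // 1 ≤ k ∧ k ≤ 2 * (l1 ++ m :: l2).sum})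
    (h : meanderRel (l1 ++ m :: l2) a.1 b.1) :
    bigToSum l1 l2 m a = bigToSum l1 l2 m b := by
  obtain ⟨x, hx1, hx2⟩ := a
  obtain ⟨y, hy1, hy2⟩ := b
  have hsb := sum_big l1 l2 m
  have hss := sum_small l1 l2
  simp only at h
  rcases h with hu | hl
  · -- y is the upper partner of x
    by_cases c1 : x ≤ 2 * l1.sum
    · have hy : y = upperPartner l1 x := by
        rw [hu, upperPartner_append_low l1 (m :: l2) x hx1 c1]
      have hmem := upperPartner_mem l1 x hx1 c1
      simp only [bigToSum]
      rw [dif_pos c1, dif_pos (show y ≤ 2 * l1.sum by omega)]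
      exact congrArg Sum.inl (Quotient.sound (Relation.EqvGen.rel _ _
        (Or.inl (by rw [upperPartner_append_low l1 l2 x hx1 c1]; exact hy))))
    · by_cases c2 : x ≤ 2 * l1.sum + 2 * m
      · have hy : y = 2 * l1.sum + (2 * m + 1 - (x - 2 * l1.sum)) := by
          rw [hu, up_big_mid l1 l2 m x (by omega) c2]
        simp only [bigToSum]
        rw [dif_neg c1, dif_pos c2, dif_neg (show ¬ y ≤ 2 * l1.sum by omega),
          dif_pos (show y ≤ 2 * l1.sum + 2 * m by omega)]
        simp only [Sum.inr.injEq, Fin.mk.injEq]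
        omega
      · have hmem := upperPartner_mem l2 (x - (2 * l1.sum + 2 * m)) (by omega) (by omega)
        have hy : y = 2 * l1.sum + 2 * m + upperPartner l2 (x - (2 * l1.sum + 2 * m)) := by
          rw [hu, up_big_high l1 l2 m x (by omega)]
        simp only [bigToSum]
        rw [dif_neg c1, dif_neg c2, dif_neg (show ¬ y ≤ 2 * l1.sum by omega),
          dif_neg (show ¬ y ≤ 2 * l1.sum + 2 * m by omega)]
        refine congrArg Sum.inl (Quotient.sound (Relation.EqvGen.rel _ _ (Or.inl ?_)))
        show y - 2 * m = upperPartner (l1 ++ l2) (x - 2 * m)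
        rw [upperPartner_append_high l1 l2 (x - 2 * m) (by omega)]
        have e : x - 2 * m - 2 * l1.sum = x - (2 * l1.sum + 2 * m) := by omega
        rw [e]; omega
  · -- y is the lower partner of x
    by_cases c1 : x ≤ 2 * l1.sum
    · simp only [bigToSum]
      rw [dif_pos c1, dif_neg (show ¬ y ≤ 2 * l1.sum by omega),
        dif_neg (show ¬ y ≤ 2 * l1.sum + 2 * m by omega)]
      exact congrArg Sum.inl (Quotient.sound (Relation.EqvGen.rel _ _
        (Or.inr (by simp only; omega))))
    · by_cases c2 : x ≤ 2 * l1.sum + 2 * m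
      · simp only [bigToSum]
        rw [dif_neg c1, dif_pos c2, dif_neg (show ¬ y ≤ 2 * l1.sum by omega),
          dif_pos (show y ≤ 2 * l1.sum + 2 * m by omega)]
        simp only [Sum.inr.injEq, Fin.mk.injEq]
        omega
      · simp only [bigToSum]
        rw [dif_neg c1, dif_neg c2, dif_pos (show y ≤ 2 * l1.sum by omega)]
        exact congrArg Sum.inl (Quotient.sound (Relation.EqvGen.rel _ _
          (Or.inr (by simp only; omega))))

lemma embedS_rel (l1 l2 : List ℕ) (m : ℕ) (hbal : l1.sum = l2.sum)
    (a b : {k : ℕ // 1 ≤ k ∧ k ≤ 2 * (l1 ++ l2).sum})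
    (h : meanderRel (l1 ++ l2) a.1 b.1) :
    meanderRel (l1 ++ m :: l2) (embedS l1 l2 m a).1 (embedS l1 l2 m b).1 := by
  obtain ⟨x, hx1, hx2⟩ := a
  obtain ⟨y, hy1, hy2⟩ := b
  have hsb := sum_big l1 l2 m
  have hss := sum_small l1 l2
  simp only at h
  rcases h with hu | hl
  · by_cases c1 : x ≤ 2 * l1.sum
    · have hy : y = upperPartner l1 x := by
        rw [hu, upperPartner_append_low l1 l2 x hx1 c1]
      have hmem := upperPartner_mem l1 x hx1 c1
      simp only [embedS]
      rw [dif_pos c1, dif_pos (show y ≤ 2 * l1.sum by omega)]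
      exact Or.inl (by rw [upperPartner_append_low l1 (m :: l2) x hx1 c1]; exact hy)
    · have hy : y = 2 * l1.sum + upperPartner l2 (x - 2 * l1.sum) := by
        rw [hu, upperPartner_append_high l1 l2 x (by omega)]
      have hmem := upperPartner_mem l2 (x - 2 * l1.sum) (by omega) (by omega)
      simp only [embedS]
      rw [dif_neg c1, dif_neg (show ¬ y ≤ 2 * l1.sum by omega)]
      refine Or.inl ?_
      show y + 2 * m = upperPartner (l1 ++ m :: l2) (x + 2 * m)
      rw [up_big_high l1 l2 m (x + 2 * m) (by omega)]
      have e : x + 2 * m - (2 * l1.sum + 2 * m) = x - 2 * l1.sum := by omega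
      rw [e]; omega
  · by_cases c1 : x ≤ 2 * l1.sum
    · simp only [embedS]
      rw [dif_pos c1, dif_neg (show ¬ y ≤ 2 * l1.sum by omega)]
      exact Or.inr (by simp only; omega)
    · simp only [embedS]
      rw [dif_neg c1, dif_pos (show y ≤ 2 * l1.sum by omega)]
      exact Or.inr (by simp only; omega)

lemma bigToSum_resp (l1 l2 : List ℕ) (m : ℕ) (hbal : l1.sum = l2.sum) :
    ∀ a b, (meanderSetoid (l1 ++ m :: l2)).r a b → bigToSum l1 l2 m a = bigToSum l1 l2 m b := by
  intro a b hab
  induction hab with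
  | rel a b h => exact bigToSum_rel l1 l2 m hbal a b h
  | refl a => rfl
  | symm _ _ _ ih => exact ih.symm
  | trans _ _ _ _ _ ih1 ih2 => exact ih1.trans ih2

lemma embedS_resp (l1 l2 : List ℕ) (m : ℕ) (hbal : l1.sum = l2.sum) :
    ∀ a b, (meanderSetoid (l1 ++ l2)).r a b →
      Quotient.mk (meanderSetoid (l1 ++ m :: l2)) (embedS l1 l2 m a)
        = Quotient.mk (meanderSetoid (l1 ++ m :: l2)) (embedS l1 l2 m b) := by
  intro a b hab
  induction hab with
  | rel a b h =>
      exact Quotient.sound (Relation.EqvGen.rel _ _ (embedS_rel l1 l2 m hbal a b h))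
  | refl a => rfl
  | symm _ _ _ ih => exact ih.symm
  | trans _ _ _ _ _ ih1 ih2 => exact ih1.trans ih2

noncomputable def bigF (l1 l2 : List ℕ) (m : ℕ) (hbal : l1.sum = l2.sum) :
    Quotient (meanderSetoid (l1 ++ m :: l2)) → Quotient (meanderSetoid (l1 ++ l2)) ⊕ Fin m :=
  Quotient.lift (bigToSum l1 l2 m) (bigToSum_resp l1 l2 m hbal)

noncomputable def bigG (l1 l2 : List ℕ) (m : ℕ) (hbal : l1.sum = l2.sum) :
    Quotient (meanderSetoid (l1 ++ l2)) ⊕ Fin m → Quotient (meanderSetoid (l1 ++ m :: l2)) :=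
  Sum.elim
    (Quotient.lift (fun s => Quotient.mk (meanderSetoid (l1 ++ m :: l2)) (embedS l1 l2 m s))
      (embedS_resp l1 l2 m hbal))
    (fun i => Quotient.mk (meanderSetoid (l1 ++ m :: l2))
      ⟨2 * l1.sum + 1 + i.1, by have := sum_big l1 l2 m; have := i.2; omega⟩)

lemma bigGF (l1 l2 : List ℕ) (m : ℕ) (hbal : l1.sum = l2.sum) :
    Function.LeftInverse (bigG l1 l2 m hbal) (bigF l1 l2 m hbal) := by
  intro q
  induction q using Quotient.inductionOn with
  | h a =>
    obtain ⟨x, hx1, hx2⟩ := a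
    have hsb := sum_big l1 l2 m
    have hss := sum_small l1 l2
    show bigG l1 l2 m hbal (bigToSum l1 l2 m ⟨x, hx1, hx2⟩) = _
    by_cases c1 : x ≤ 2 * l1.sum
    · simp only [bigToSum]; rw [dif_pos c1]
      show Quotient.mk _ (embedS l1 l2 m ⟨x, _⟩) = _
      simp only [embedS]; rw [dif_pos c1]
    · by_cases c2 : x ≤ 2 * l1.sum + 2 * m
      · simp only [bigToSum]; rw [dif_neg c1, dif_pos c2]
        simp only [bigG, Sum.elim_inr]
        by_cases c3 : x - 2 * l1.sum ≤ m
        · exact congrArg _ (Subtype.ext (by simp only; omega))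
        · exact Quotient.sound (Relation.EqvGen.symm _ _ (Relation.EqvGen.rel _ _
            (Or.inl (by
              show 2 * l1.sum + 1 + min _ _ = upperPartner (l1 ++ m :: l2) x
              rw [up_big_mid l1 l2 m x (by omega) c2]; omega))))
      · simp only [bigToSum]; rw [dif_neg c1, dif_neg c2]
        show Quotient.mk _ (embedS l1 l2 m ⟨x - 2 * m, _⟩) = _
        simp only [embedS]
        rw [dif_neg (show ¬ x - 2 * m ≤ 2 * l1.sum by omega)]
        exact congrArg _ (Subtype.ext (by simp only; omega))

lemma bigFG (l1 l2 : List ℕ) (m : ℕ) (hbal : l1.sum = l2.sum) :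
    Function.RightInverse (bigG l1 l2 m hbal) (bigF l1 l2 m hbal) := by
  intro q
  have hsb := sum_big l1 l2 m
  have hss := sum_small l1 l2
  rcases q with q | i
  · induction q using Quotient.inductionOn with
    | h s =>
      obtain ⟨x, hx1, hx2⟩ := s
      show bigF l1 l2 m hbal (Quotient.mk _ (embedS l1 l2 m ⟨x, hx1, hx2⟩)) = _
      simp only [embedS]
      by_cases c1 : x ≤ 2 * l1.sum
      · rw [dif_pos c1]
        show bigToSum l1 l2 m ⟨x, _⟩ = _
        simp only [bigToSum]; rw [dif_pos c1]
      · rw [dif_neg c1]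
        show bigToSum l1 l2 m ⟨x + 2 * m, _⟩ = _
        simp only [bigToSum]
        rw [dif_neg (show ¬ x + 2 * m ≤ 2 * l1.sum by omega),
          dif_neg (show ¬ x + 2 * m ≤ 2 * l1.sum + 2 * m by omega)]
        exact congrArg Sum.inl (congrArg _ (Subtype.ext (by simp only; omega)))
  · show bigToSum l1 l2 m ⟨2 * l1.sum + 1 + i.1, _⟩ = _
    have hi := i.2
    simp only [bigToSum]
    rw [dif_neg (by omega), dif_pos (by omega)]
    exact congrArg Sum.inr (Fin.ext (by simp only; omega))

instance meanderPointsFinite (l : List ℕ) : Finite {k : ℕ // 1 ≤ k ∧ k ≤ 2 * l.sum} := by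
  apply Finite.of_injective (fun s => (⟨s.1, by have := s.2.2; omega⟩ : Fin (2 * l.sum + 1)))
  intro a b h
  exact Subtype.ext (by simpa [Fin.ext_iff] using h)


/-- Inner nose retraction, balanced case: if the families left and right of the
m-th family carry equally many arcs, then the m-th family splits off as α_m
separate cycles: Z(α₁,…,αₙ) = Z(α₁,…,α_{m-1},α_{m+1},…,αₙ) + α_m. -/
theorem inner_retraction_balanced (l1 l2 : List ℕ) (m : ℕ) (hm : 0 < m)
    (hpos1 : ∀ x ∈ l1, 0 < x) (hpos2 : ∀ x ∈ l2, 0 < x)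
    (hbal : l1.sum = l2.sum) :
    Z (l1 ++ m :: l2) = Z (l1 ++ l2) + m := by
  have e : Quotient (meanderSetoid (l1 ++ m :: l2))
      ≃ (Quotient (meanderSetoid (l1 ++ l2)) ⊕ Fin m) :=
    ⟨bigF l1 l2 m hbal, bigG l1 l2 m hbal, bigGF l1 l2 m hbal, bigFG l1 l2 m hbal⟩
  have : Finite (Quotient (meanderSetoid (l1 ++ l2))) := Quotient.finite _
  rw [Z, Z, Nat.card_congr e, Nat.card_sum]
  simp
end

section
/- Inner nose retraction, general case: let RM(α₁,...,αₙ) be a bi-rainbow meander, m* the middle family index (defined by L* = α₁+...+α_{m*-1} < α/2 ≤ L* + α_{m*}), and R* = α_{m*+1}+...+αₙ. If 0 < |L* − R*| < α_{m*}, then Z(α₁,...,αₙ) = Z(α₁,...,α_{m*-1}, α_{m*} − |L* − R*|, α_{m*+1},...,αₙ). -/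
/-!
Let `L` and `R` be the total sizes of the families to the left and to the right of the middle
family, `d = L - R`, and compare `B = RM(l₁, m + d, l₂)` with `S = RM(l₁, m, l₂)`; the case
`L < R` follows by reflecting the meander. Since the middle family of `B` is off-centre by `d`,
following a lower arc and then a middle-family arc of `B` shifts a point by exactly `2d`.
`S` embeds into `B` by inserting `2d` points at its centre, which respects the lower arcs, and
the inserted points (the nose) are pushed back onto the image along such `2d`-shifts. Both maps
send arcs to connected pairs and are mutually inverse up to connectivity, so they induce a
bijection between the Jordan curves of `B` and those of `S`.
-/

theorem List.sum_append_cons {M : Type*} [AddMonoid M] (l₁ l₂ : List M) (a : M) :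
    (l₁ ++ a :: l₂).sum = l₁.sum + a + l₂.sum := by
  simp [add_assoc]

theorem upperPartner_bounds {l : List ℕ} {k : ℕ} (hk : 1 ≤ k ∧ k ≤ 2 * l.sum) :
    1 ≤ upperPartner l k ∧ upperPartner l k ≤ 2 * l.sum := by
  induction l generalizing k with
  | nil => simp at hk; omega
  | cons a rest ih =>
    simp only [List.sum_cons] at hk ⊢
    rw [upperPartner]
    split_ifs with h
    · omega
    · have := ih (k := k - 2 * a) (by omega)
      omega

theorem upperPartner_append_of_le {a : List ℕ} (b : List ℕ) {k : ℕ}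
    (hk : 1 ≤ k ∧ k ≤ 2 * a.sum) : upperPartner (a ++ b) k = upperPartner a k := by
  induction a generalizing k with
  | nil => simp at hk; omega
  | cons x xs ih =>
    simp only [List.sum_cons] at hk
    rw [List.cons_append, upperPartner, upperPartner]
    split_ifs with h
    · rfl
    · rw [ih (by omega)]

theorem upperPartner_append_of_lt (a b : List ℕ) {k : ℕ} (hk : 2 * a.sum < k) :
    upperPartner (a ++ b) k = 2 * a.sum + upperPartner b (k - 2 * a.sum) := by
  induction a generalizing k with
  | nil => simp
  | cons x xs ih =>
    simp only [List.sum_cons] at hk ⊢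
    rw [List.cons_append, upperPartner, if_neg (by omega), ih (by omega), Nat.sub_sub]
    ring_nf

theorem upperPartner_append_cons_of_lt_of_le (l₁ l₂ : List ℕ) (a : ℕ) {k : ℕ}
    (hk₁ : 2 * l₁.sum < k) (hk₂ : k ≤ 2 * (l₁.sum + a)) :
    upperPartner (l₁ ++ a :: l₂) k = 4 * l₁.sum + 2 * a + 1 - k := by
  rw [upperPartner_append_of_lt _ _ hk₁, upperPartner, if_pos (by omega)]
  omega

theorem upperPartner_append_cons_of_lt (l₁ l₂ : List ℕ) (a : ℕ) {k : ℕ}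
    (hk : 2 * (l₁.sum + a) < k) :
    upperPartner (l₁ ++ a :: l₂) k =
      2 * (l₁.sum + a) + upperPartner l₂ (k - 2 * (l₁.sum + a)) := by
  rw [upperPartner_append_of_lt _ _ (by omega), upperPartner, if_neg (by omega), Nat.sub_sub]
  ring_nf

theorem upperPartner_reverse {l : List ℕ} {k : ℕ} (hk : 1 ≤ k ∧ k ≤ 2 * l.sum) :
    upperPartner l.reverse (2 * l.sum + 1 - k) = 2 * l.sum + 1 - upperPartner l k := by
  induction l generalizing k with
  | nil => simp at hk; omega
  | cons a rest ih =>
    simp only [List.sum_cons] at hk ⊢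
    rw [List.reverse_cons, upperPartner]
    split_ifs with h
    · rw [upperPartner_append_of_lt _ _ (by rw [List.sum_reverse]; omega), List.sum_reverse,
        upperPartner, if_pos (by omega)]
      omega
    · have hb := upperPartner_bounds (l := rest) (k := k - 2 * a) (by omega)
      rw [upperPartner_append_of_le _ (by rw [List.sum_reverse]; omega),
        show 2 * (a + rest.sum) + 1 - k = 2 * rest.sum + 1 - (k - 2 * a) by omega, ih (by omega)]
      omega

def MeanderConnected (l : List ℕ) (x y : ℕ) : Prop :=
  ∃ (hx : 1 ≤ x ∧ x ≤ 2 * l.sum) (hy : 1 ≤ y ∧ y ≤ 2 * l.sum),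
    meanderSetoid l ⟨x, hx⟩ ⟨y, hy⟩

section MeanderConnected

variable {l : List ℕ} {x y z : ℕ}

theorem MeanderConnected.refl (hx : 1 ≤ x ∧ x ≤ 2 * l.sum) : MeanderConnected l x x :=
  ⟨hx, hx, (meanderSetoid l).refl _⟩

theorem MeanderConnected.symm (h : MeanderConnected l x y) : MeanderConnected l y x :=
  let ⟨hx, hy, h⟩ := h
  ⟨hy, hx, (meanderSetoid l).symm h⟩

theorem MeanderConnected.trans (h : MeanderConnected l x y) (h' : MeanderConnected l y z) :
    MeanderConnected l x z :=
  let ⟨hx, _, h⟩ := h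
  let ⟨_, hz, h'⟩ := h'
  ⟨hx, hz, (meanderSetoid l).trans h h'⟩

theorem MeanderConnected.mem_left (h : MeanderConnected l x y) : 1 ≤ x ∧ x ≤ 2 * l.sum :=
  h.1

theorem meanderConnected_upperPartner (hx : 1 ≤ x ∧ x ≤ 2 * l.sum) :
    MeanderConnected l x (upperPartner l x) :=
  ⟨hx, upperPartner_bounds hx, Relation.EqvGen.rel _ _ (Or.inl rfl)⟩

theorem meanderConnected_mirror (hx : 1 ≤ x ∧ x ≤ 2 * l.sum) :
    MeanderConnected l x (2 * l.sum + 1 - x) :=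
  ⟨hx, by omega, Relation.EqvGen.rel _ _ (Or.inr rfl)⟩

theorem MeanderConnected.of_meanderRel (hx : 1 ≤ x ∧ x ≤ 2 * l.sum) (h : meanderRel l x y) :
    MeanderConnected l x y := by
  rcases h with rfl | rfl
  exacts [meanderConnected_upperPartner hx, meanderConnected_mirror hx]

end MeanderConnected

theorem Z_eq_of_retraction {l l' : List ℕ} (f g : ℕ → ℕ)
    (hf : ∀ x y, 1 ≤ x ∧ x ≤ 2 * l.sum → meanderRel l x y → MeanderConnected l' (f x) (f y))
    (hg : ∀ x y, 1 ≤ x ∧ x ≤ 2 * l'.sum → meanderRel l' x y → MeanderConnected l (g x) (g y))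
    (hgf : ∀ x, 1 ≤ x ∧ x ≤ 2 * l.sum → MeanderConnected l (g (f x)) x)
    (hfg : ∀ y, 1 ≤ y ∧ y ≤ 2 * l'.sum → f (g y) = y) :
    Z l = Z l' := by
  let F : {k // 1 ≤ k ∧ k ≤ 2 * l.sum} → {k // 1 ≤ k ∧ k ≤ 2 * l'.sum} :=
    fun p => ⟨f p, (hf p _ p.2 (Or.inr rfl)).mem_left⟩
  let G : {k // 1 ≤ k ∧ k ≤ 2 * l'.sum} → {k // 1 ≤ k ∧ k ≤ 2 * l.sum} :=
    fun q => ⟨g q, (hg q _ q.2 (Or.inr rfl)).mem_left⟩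
  have hF : meanderSetoid l ≤ (meanderSetoid l').comap F :=
    Setoid.eqvGen_le fun a b h => (hf a b a.2 h).2.2
  have hG : meanderSetoid l' ≤ (meanderSetoid l).comap G :=
    Setoid.eqvGen_le fun a b h => (hg a b a.2 h).2.2
  exact Nat.card_congr
    { toFun := Quotient.map F fun _ _ h => hF h
      invFun := Quotient.map G fun _ _ h => hG h
      left_inv := Quotient.ind fun p => Quotient.sound (hgf p p.2).2.2
      right_inv := Quotient.ind fun q => congrArg _ (Subtype.ext (hfg q q.2)) }

theorem meanderRel_reverse {l : List ℕ} {x y : ℕ} (hx : 1 ≤ x ∧ x ≤ 2 * l.sum)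
    (h : meanderRel l x y) :
    meanderRel l.reverse (2 * l.sum + 1 - x) (2 * l.sum + 1 - y) := by
  rw [meanderRel, List.sum_reverse]
  rcases h with rfl | rfl
  · exact Or.inl (upperPartner_reverse hx).symm
  · right; omega

theorem Z_reverse (l : List ℕ) : Z l.reverse = Z l := by
  have hmirror : ∀ x, 1 ≤ x ∧ x ≤ 2 * l.sum → 2 * l.sum + 1 - (2 * l.sum + 1 - x) = x :=
    fun _ _ => by omega
  refine Z_eq_of_retraction (fun x => 2 * l.sum + 1 - x) (fun x => 2 * l.sum + 1 - x)
    (fun x y hx h => ?_) (fun x y hx h => ?_) (fun x hx => ?_) hmirror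
  · rw [List.sum_reverse] at hx
    have h' := meanderRel_reverse (l := l.reverse) (by rwa [List.sum_reverse]) h
    rw [List.reverse_reverse, List.sum_reverse] at h'
    exact .of_meanderRel (by omega) h'
  · exact .of_meanderRel (by rw [List.sum_reverse]; omega) (meanderRel_reverse hx h)
  · rw [List.sum_reverse] at hx
    rw [hmirror x hx]
    exact .refl (by rwa [List.sum_reverse])

theorem Z_append_cons_eq_reverse (l₁ l₂ : List ℕ) (a : ℕ) :
    Z (l₁ ++ a :: l₂) = Z (l₂.reverse ++ a :: l₁.reverse) := by
  rw [← Z_reverse]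
  simp

/- With `n = (l₁ ++ m :: l₂).sum`, `noseInclusion` inserts the `2d` points `(n, n + 2d]` at the
centre of `l₁ ++ m :: l₂`. Its left inverse `noseRetraction` sends an inserted point `v` of the
middle family to its lower partner `2(n + d) + 1 - v`, whose inclusion is the upper partner of
`v`; an inserted point of `l₁` is `2d`-shift connected to its own inclusion. -/
def noseInclusion (l₁ l₂ : List ℕ) (m d y : ℕ) : ℕ :=
  if y ≤ l₁.sum + m + l₂.sum then y else y + 2 * d

def noseRetraction (l₁ l₂ : List ℕ) (m d v : ℕ) : ℕ :=
  if v ≤ l₁.sum + m + l₂.sum ∨ v ≤ 2 * l₁.sum then v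
  else if v ≤ l₁.sum + m + l₂.sum + 2 * d then 2 * (l₁.sum + m + d + l₂.sum) + 1 - v
  else v - 2 * d

section NoseRetraction

variable {l₁ l₂ : List ℕ} {m d : ℕ}

theorem meanderConnected_add_two_mul (hL : l₁.sum = l₂.sum + d) {w : ℕ}
    (hw : 2 * l₂.sum < w ∧ w ≤ 2 * (l₁.sum + m)) :
    MeanderConnected (l₁ ++ (m + d) :: l₂) w (w + 2 * d) := by
  have hB := List.sum_append_cons l₁ l₂ (m + d)
  have hmir := meanderConnected_mirror (l := l₁ ++ (m + d) :: l₂) (x := w) (by omega)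
  have hup := meanderConnected_upperPartner hmir.symm.mem_left
  rw [upperPartner_append_cons_of_lt_of_le _ _ _ (by omega) (by omega)] at hup
  convert hmir.trans hup using 2
  omega

theorem meanderConnected_noseRetraction_middle (hL : l₁.sum = l₂.sum + d) {x : ℕ}
    (hx : 2 * l₁.sum < x ∧ x ≤ 2 * l₁.sum + (m + d)) :
    MeanderConnected (l₁ ++ m :: l₂) (noseRetraction l₁ l₂ m d x)
      (noseRetraction l₁ l₂ m d (4 * l₁.sum + 2 * (m + d) + 1 - x)) := by
  have hS := List.sum_append_cons l₁ l₂ m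
  by_cases hn : x ≤ l₁.sum + m + l₂.sum
  · have h := meanderConnected_upperPartner (l := l₁ ++ m :: l₂) (x := x) (by omega)
    rw [upperPartner_append_cons_of_lt_of_le _ _ _ (by omega) (by omega)] at h
    convert h using 2 <;> simp only [noseRetraction] <;> split_ifs <;> omega
  · convert MeanderConnected.refl (l := l₁ ++ m :: l₂) (x := 4 * l₁.sum + 2 * m + 1 - x)
      (by omega) using 2 <;> simp only [noseRetraction] <;> split_ifs <;> omega

theorem meanderConnected_noseRetraction_upperPartner (hL : l₁.sum = l₂.sum + d) {x : ℕ}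
    (hx : 1 ≤ x ∧ x ≤ 2 * (l₁ ++ (m + d) :: l₂).sum) :
    MeanderConnected (l₁ ++ m :: l₂) (noseRetraction l₁ l₂ m d x)
      (noseRetraction l₁ l₂ m d (upperPartner (l₁ ++ (m + d) :: l₂) x)) := by
  have hB := List.sum_append_cons l₁ l₂ (m + d)
  have hS := List.sum_append_cons l₁ l₂ m
  rcases le_or_gt x (2 * l₁.sum) with h₁ | h₁
  · have hb := upperPartner_bounds (l := l₁) ⟨hx.1, h₁⟩
    have h := meanderConnected_upperPartner (l := l₁ ++ m :: l₂) (x := x) (by omega)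
    rw [upperPartner_append_of_le _ ⟨hx.1, h₁⟩] at h ⊢
    convert h using 2 <;> simp only [noseRetraction] <;> split_ifs <;> omega
  rcases le_or_gt x (2 * (l₁.sum + (m + d))) with h₂ | h₂
  · rw [upperPartner_append_cons_of_lt_of_le _ _ _ h₁ h₂]
    by_cases h₃ : x ≤ 2 * l₁.sum + (m + d)
    · exact meanderConnected_noseRetraction_middle hL ⟨h₁, h₃⟩
    · have h := meanderConnected_noseRetraction_middle (m := m) hL
        (x := 4 * l₁.sum + 2 * (m + d) + 1 - x) (by omega)
      rw [show 4 * l₁.sum + 2 * (m + d) + 1 - (4 * l₁.sum + 2 * (m + d) + 1 - x) = x by omega]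
        at h
      exact h.symm
  · have hb := upperPartner_bounds (l := l₂) (k := x - 2 * (l₁.sum + (m + d))) (by omega)
    have h := meanderConnected_upperPartner (l := l₁ ++ m :: l₂) (x := x - 2 * d) (by omega)
    rw [upperPartner_append_cons_of_lt _ _ _ h₂]
    rw [upperPartner_append_cons_of_lt _ _ _ (by omega),
      show x - 2 * d - 2 * (l₁.sum + m) = x - 2 * (l₁.sum + (m + d)) by omega] at h
    convert h using 2 <;> simp only [noseRetraction] <;> split_ifs <;> omega

theorem meanderConnected_noseRetraction_mirror_of_le (hL : l₁.sum = l₂.sum + d) (hm : 0 < m)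
    {x : ℕ} (hx : 1 ≤ x ∧ x ≤ (l₁ ++ (m + d) :: l₂).sum) :
    MeanderConnected (l₁ ++ m :: l₂) (noseRetraction l₁ l₂ m d x)
      (noseRetraction l₁ l₂ m d (2 * (l₁ ++ (m + d) :: l₂).sum + 1 - x)) := by
  have hB := List.sum_append_cons l₁ l₂ (m + d)
  have hS := List.sum_append_cons l₁ l₂ m
  by_cases h₁ : x ≤ l₁.sum + m + l₂.sum
  · convert meanderConnected_mirror (l := l₁ ++ m :: l₂) (x := x) (by omega) using 2 <;>
      simp only [noseRetraction] <;> split_ifs <;> omega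
  by_cases h₂ : x ≤ 2 * l₁.sum
  · convert MeanderConnected.refl (l := l₁ ++ m :: l₂) (x := x) (by omega) using 2 <;>
      simp only [noseRetraction] <;> split_ifs <;> omega
  · have h := meanderConnected_upperPartner (l := l₁ ++ m :: l₂) (x := x) (by omega)
    rw [upperPartner_append_cons_of_lt_of_le _ _ _ (by omega) (by omega)] at h
    convert h.symm using 2 <;> simp only [noseRetraction] <;> split_ifs <;> omega

theorem meanderConnected_noseRetraction_of_meanderRel (hL : l₁.sum = l₂.sum + d) (hm : 0 < m)
    {x y : ℕ} (hx : 1 ≤ x ∧ x ≤ 2 * (l₁ ++ (m + d) :: l₂).sum)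
    (h : meanderRel (l₁ ++ (m + d) :: l₂) x y) :
    MeanderConnected (l₁ ++ m :: l₂) (noseRetraction l₁ l₂ m d x) (noseRetraction l₁ l₂ m d y) := by
  rcases h with rfl | rfl
  · exact meanderConnected_noseRetraction_upperPartner hL hx
  by_cases h : x ≤ (l₁ ++ (m + d) :: l₂).sum
  · exact meanderConnected_noseRetraction_mirror_of_le hL hm ⟨hx.1, h⟩
  · have h' := meanderConnected_noseRetraction_mirror_of_le hL hm
      (x := 2 * (l₁ ++ (m + d) :: l₂).sum + 1 - x) (by omega)
    rw [show 2 * (l₁ ++ (m + d) :: l₂).sum + 1 - (2 * (l₁ ++ (m + d) :: l₂).sum + 1 - x) = x by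
      omega] at h'
    exact h'.symm

theorem meanderConnected_noseInclusion (hL : l₁.sum = l₂.sum + d) {w : ℕ}
    (hw : 1 ≤ w ∧ w ≤ 2 * (l₁.sum + m)) :
    MeanderConnected (l₁ ++ (m + d) :: l₂) w (noseInclusion l₁ l₂ m d w) := by
  unfold noseInclusion
  split_ifs with h
  · exact .refl (by rw [List.sum_append_cons]; omega)
  · exact meanderConnected_add_two_mul hL (by omega)

theorem noseInclusion_mirror (hL : l₁.sum = l₂.sum + d) {y : ℕ}
    (hy : 1 ≤ y ∧ y ≤ 2 * (l₁ ++ m :: l₂).sum) :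
    noseInclusion l₁ l₂ m d (2 * (l₁ ++ m :: l₂).sum + 1 - y) =
      2 * (l₁ ++ (m + d) :: l₂).sum + 1 - noseInclusion l₁ l₂ m d y := by
  simp only [noseInclusion, List.sum_append_cons] at hy ⊢
  split_ifs <;> omega

theorem meanderConnected_noseInclusion_of_meanderRel (hL : l₁.sum = l₂.sum + d)
    {y z : ℕ} (hy : 1 ≤ y ∧ y ≤ 2 * (l₁ ++ m :: l₂).sum) (h : meanderRel (l₁ ++ m :: l₂) y z) :
    MeanderConnected (l₁ ++ (m + d) :: l₂) (noseInclusion l₁ l₂ m d y)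
      (noseInclusion l₁ l₂ m d z) := by
  have hB := List.sum_append_cons l₁ l₂ (m + d)
  have hS := List.sum_append_cons l₁ l₂ m
  rcases h with rfl | rfl
  swap
  · rw [noseInclusion_mirror hL hy]
    exact meanderConnected_mirror (by simp only [noseInclusion]; split_ifs <;> omega)
  rcases le_or_gt y (2 * l₁.sum) with h₁ | h₁
  · have hb := upperPartner_bounds (l := l₁) ⟨hy.1, h₁⟩
    have h := meanderConnected_upperPartner (l := l₁ ++ (m + d) :: l₂) (x := y) (by omega)
    rw [upperPartner_append_of_le _ ⟨hy.1, h₁⟩] at h ⊢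
    exact (meanderConnected_noseInclusion hL (by omega)).symm.trans
      (h.trans (meanderConnected_noseInclusion hL (by omega)))
  rcases le_or_gt y (2 * (l₁.sum + m)) with h₂ | h₂
  · have h := meanderConnected_upperPartner (l := l₁ ++ (m + d) :: l₂) (x := y) (by omega)
    rw [upperPartner_append_cons_of_lt_of_le _ _ _ (by omega) (by omega)] at h
    rw [upperPartner_append_cons_of_lt_of_le _ _ _ h₁ h₂]
    have h' := (meanderConnected_add_two_mul (m := m) hL (w := 4 * l₁.sum + 2 * m + 1 - y)
      (by omega)).symm.trans (meanderConnected_noseInclusion hL (by omega))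
    refine (meanderConnected_noseInclusion hL (by omega)).symm.trans (h.trans ?_)
    convert h' using 2
    omega
  · have hb := upperPartner_bounds (l := l₂) (k := y - 2 * (l₁.sum + m)) (by omega)
    have h := meanderConnected_upperPartner (l := l₁ ++ (m + d) :: l₂) (x := y + 2 * d)
      (by omega)
    rw [upperPartner_append_cons_of_lt _ _ _ (by omega),
      show y + 2 * d - 2 * (l₁.sum + (m + d)) = y - 2 * (l₁.sum + m) by omega] at h
    rw [upperPartner_append_cons_of_lt _ _ _ h₂]
    convert h using 2 <;> simp only [noseInclusion] <;> split_ifs <;> omega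

theorem meanderConnected_noseInclusion_noseRetraction (hL : l₁.sum = l₂.sum + d) {v : ℕ}
    (hv : 1 ≤ v ∧ v ≤ 2 * (l₁ ++ (m + d) :: l₂).sum) :
    MeanderConnected (l₁ ++ (m + d) :: l₂)
      (noseInclusion l₁ l₂ m d (noseRetraction l₁ l₂ m d v)) v := by
  have hB := List.sum_append_cons l₁ l₂ (m + d)
  unfold noseRetraction
  split_ifs with h₁ h₂
  · exact (meanderConnected_noseInclusion hL (by omega)).symm
  · exact (meanderConnected_noseInclusion hL (by omega)).symm.trans
      (by convert (meanderConnected_mirror hv).symm using 2; omega)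
  · convert MeanderConnected.refl hv using 1
    simp only [noseInclusion]
    split_ifs <;> omega

theorem noseRetraction_noseInclusion (hL : l₁.sum = l₂.sum + d) (y : ℕ) :
    noseRetraction l₁ l₂ m d (noseInclusion l₁ l₂ m d y) = y := by
  simp only [noseRetraction, noseInclusion]
  split_ifs <;> omega

theorem Z_append_cons_add (hL : l₁.sum = l₂.sum + d) (hm : 0 < m) :
    Z (l₁ ++ (m + d) :: l₂) = Z (l₁ ++ m :: l₂) :=
  Z_eq_of_retraction (noseRetraction l₁ l₂ m d) (noseInclusion l₁ l₂ m d)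
    (fun _ _ hx h => meanderConnected_noseRetraction_of_meanderRel hL hm hx h)
    (fun _ _ hy h => meanderConnected_noseInclusion_of_meanderRel hL hy h)
    (fun _ hv => meanderConnected_noseInclusion_noseRetraction hL hv)
    (fun y _ => noseRetraction_noseInclusion hL y)

theorem Z_append_cons_sub (hRL : l₂.sum ≤ l₁.sum) (hm : l₁.sum - l₂.sum < m) :
    Z (l₁ ++ m :: l₂) = Z (l₁ ++ (m - (l₁.sum - l₂.sum)) :: l₂) := by
  obtain ⟨m', rfl⟩ : ∃ m', m = m' + (l₁.sum - l₂.sum) := ⟨m - (l₁.sum - l₂.sum), by omega⟩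
  rw [Nat.add_sub_cancel]
  exact Z_append_cons_add (by omega) (by omega)

end NoseRetraction

theorem inner_retraction_general_general (l1 l2 : List ℕ) (m : ℕ)
    (hhi : max l1.sum l2.sum - min l1.sum l2.sum < m) :
    Z (l1 ++ m :: l2) = Z (l1 ++ (m - (max l1.sum l2.sum - min l1.sum l2.sum)) :: l2) := by
  rcases le_total l2.sum l1.sum with h | h
  · rw [max_eq_left h, min_eq_right h] at hhi ⊢
    exact Z_append_cons_sub h hhi
  · rw [max_eq_right h, min_eq_left h] at hhi ⊢
    rw [Z_append_cons_eq_reverse, Z_append_cons_eq_reverse l1]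
    have := Z_append_cons_sub (l₁ := l2.reverse) (l₂ := l1.reverse) (m := m)
    simp only [List.sum_reverse] at this
    exact this h hhi

/-- Inner nose retraction, general case: let m* be the middle family, i.e.
L* = α₁+⋯+α_{m*-1} < α/2 ≤ L* + α_{m*}, and R* = α_{m*+1}+⋯+αₙ.  If
0 < |L* − R*| < α_{m*}, then Z(α₁,…,αₙ) = Z(α₁,…,α_{m*-1}, α_{m*} − |L*−R*|,
α_{m*+1},…,αₙ). -/
theorem inner_retraction_general (l1 l2 : List ℕ) (m : ℕ) (hm : 0 < m)
    (hpos1 : ∀ x ∈ l1, 0 < x) (hpos2 : ∀ x ∈ l2, 0 < x)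
    (hmidL : 2 * l1.sum < (l1 ++ m :: l2).sum)
    (hmidR : (l1 ++ m :: l2).sum ≤ 2 * (l1.sum + m))
    (hlo : 0 < max l1.sum l2.sum - min l1.sum l2.sum)
    (hhi : max l1.sum l2.sum - min l1.sum l2.sum < m) :
    Z (l1 ++ m :: l2) = Z (l1 ++ (m - (max l1.sum l2.sum - min l1.sum l2.sum)) :: l2) :=
  inner_retraction_general_general l1 l2 m hhi
end

section
/- For all positive integers α̃ ≥ 2 and α* ≥ 1, the bi-rainbow meander RM(α̃, α̃−1, α*, 2α̃) with four upper families is connected: Z(α̃, α̃−1, α*, 2α̃) = 1. -/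
namespace FourFam

/-- The reachability relation on the underlying numbers. -/
def R (a s x y : ℕ) : Prop :=
  ∃ (hx : 1 ≤ x ∧ x ≤ 2 * ([a, a - 1, s, 2 * a] : List ℕ).sum)
    (hy : 1 ≤ y ∧ y ≤ 2 * ([a, a - 1, s, 2 * a] : List ℕ).sum),
    Relation.EqvGen
      (fun u v : {k : ℕ // 1 ≤ k ∧ k ≤ 2 * ([a, a - 1, s, 2 * a] : List ℕ).sum} =>
        meanderRel [a, a - 1, s, 2 * a] u.1 v.1) ⟨x, hx⟩ ⟨y, hy⟩

variable {a s : ℕ}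

lemma sum_l (ha : 2 ≤ a) : ([a, a - 1, s, 2 * a] : List ℕ).sum = 4 * a - 1 + s := by
  simp; omega

lemma R.refl (ha : 2 ≤ a) (h1 : 1 ≤ x) (h2 : x ≤ 8 * a - 2 + 2 * s) : R a s x x := by
  have hs := sum_l (s := s) ha
  exact ⟨⟨h1, by omega⟩, ⟨h1, by omega⟩, Relation.EqvGen.refl _⟩

lemma R.symm (h : R a s x y) : R a s y x := by
  obtain ⟨hx, hy, hE⟩ := h
  exact ⟨hy, hx, hE.symm _ _⟩

lemma R.trans (h : R a s x y) (h' : R a s y z) : R a s x z := by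
  obtain ⟨hx, hy, hE⟩ := h
  obtain ⟨hy', hz, hE'⟩ := h'
  exact ⟨hx, hz, hE.trans _ _ _ hE'⟩

-- upperPartner values on each block
lemma UP1 (h2 : x ≤ 2 * a) :
    upperPartner [a, a - 1, s, 2 * a] x = 2 * a + 1 - x := by
  simp only [upperPartner]; split_ifs <;> omega

lemma UP2 (ha : 2 ≤ a) (h1 : 2 * a < x) (h2 : x ≤ 4 * a - 2) :
    upperPartner [a, a - 1, s, 2 * a] x = 6 * a - 1 - x := by
  simp only [upperPartner]; split_ifs <;> omega

lemma UP3 (ha : 2 ≤ a) (h1 : 4 * a - 2 < x) (h2 : x ≤ 4 * a - 2 + 2 * s) :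
    upperPartner [a, a - 1, s, 2 * a] x = 8 * a - 3 + 2 * s - x := by
  simp only [upperPartner]; split_ifs <;> omega

lemma UP4 (ha : 2 ≤ a) (h1 : 4 * a - 2 + 2 * s < x) (h2 : x ≤ 8 * a - 2 + 2 * s) :
    upperPartner [a, a - 1, s, 2 * a] x = 12 * a - 3 + 4 * s - x := by
  simp only [upperPartner]; split_ifs <;> omega

-- single-step moves
lemma stepU (ha : 2 ≤ a) (h1 : 1 ≤ x) (h2 : x ≤ 8 * a - 2 + 2 * s)
    (g1 : 1 ≤ y) (g2 : y ≤ 8 * a - 2 + 2 * s)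
    (h : y = upperPartner [a, a - 1, s, 2 * a] x) : R a s x y := by
  have hs := sum_l (s := s) ha
  exact ⟨⟨h1, by omega⟩, ⟨g1, by omega⟩, Relation.EqvGen.rel _ _ (Or.inl h)⟩

lemma stepL (ha : 2 ≤ a) (h1 : 1 ≤ x) (h2 : x ≤ 8 * a - 2 + 2 * s)
    (g1 : 1 ≤ y) (g2 : y ≤ 8 * a - 2 + 2 * s)
    (h : y = 8 * a - 1 + 2 * s - x) : R a s x y := by
  have hs := sum_l (s := s) ha
  refine ⟨⟨h1, by omega⟩, ⟨g1, by omega⟩, Relation.EqvGen.rel _ _ (Or.inr ?_)⟩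
  simp only [hs]; omega

-- named moves
lemma mA (ha : 2 ≤ a) (h1 : 1 ≤ x) (h2 : x ≤ 2 * a) (hy : y = 2 * a + 1 - x) :
    R a s x y :=
  stepU ha h1 (by omega) (by omega) (by omega) (by rw [UP1 h2]; omega)

lemma mB (ha : 2 ≤ a) (h1 : 2 * a + 1 ≤ x) (h2 : x ≤ 4 * a - 2) (hy : y = 6 * a - 1 - x) :
    R a s x y :=
  stepU ha (by omega) (by omega) (by omega) (by omega)
    (by rw [UP2 ha (by omega) h2]; omega)

lemma mU3 (ha : 2 ≤ a) (h1 : 4 * a - 1 ≤ x) (h2 : x ≤ 4 * a - 2 + 2 * s)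
    (hy : y = 8 * a - 3 + 2 * s - x) : R a s x y :=
  stepU ha (by omega) (by omega) (by omega) (by omega)
    (by rw [UP3 ha (by omega) h2]; omega)

lemma mU4 (ha : 2 ≤ a) (h1 : 4 * a - 1 + 2 * s ≤ x) (h2 : x ≤ 8 * a - 2 + 2 * s)
    (hy : y = 12 * a - 3 + 4 * s - x) : R a s x y :=
  stepU ha (by omega) h2 (by omega) (by omega)
    (by rw [UP4 ha (by omega) h2]; omega)

lemma mL (ha : 2 ≤ a) (h1 : 1 ≤ x) (h2 : x ≤ 8 * a - 2 + 2 * s)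
    (hy : y = 8 * a - 1 + 2 * s - x) : R a s x y :=
  stepL ha h1 h2 (by omega) (by omega) hy

/-- For `p ∈ [1, 4a]`, `p ~ 4a+1-p` (via L, U₄, L). -/
lemma mC (ha : 2 ≤ a) (h1 : 1 ≤ p) (h2 : p ≤ 4 * a) (hy : y = 4 * a + 1 - p) :
    R a s p y := by
  refine (mL ha h1 (by omega) rfl).trans ((mU4 ha (by omega) (by omega) rfl).trans
    (mL ha (by omega) (by omega) ?_))
  omega

/-- Descent by 2 on `[3, 2a]` (via C, B, C, A). -/
lemma desc_top (ha : 2 ≤ a) (h1 : 3 ≤ x) (h2 : x ≤ 2 * a) : R a s x (x - 2) := by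
  refine (mC ha (by omega) (by omega) rfl).trans ?_
  refine (mB ha (by omega) (by omega) rfl).trans ?_
  refine (mC ha (by omega) (by omega) rfl).trans ?_
  exact mA ha (by omega) (by omega) (by omega)

/-- Descent by 2 on `[4a+1, 4a+2s]` (via L, U₃). -/
lemma desc_mid (ha : 2 ≤ a) (h1 : 4 * a + 1 ≤ x) (h2 : x ≤ 4 * a + 2 * s) :
    R a s x (x - 2) := by
  refine (mL ha (by omega) (by omega) rfl).trans (mU3 ha (by omega) (by omega) ?_)
  omega

/-- All of `[1, 2a]` connects to `1`. -/
lemma small_to_one (ha : 2 ≤ a) : ∀ x, 1 ≤ x → x ≤ 2 * a → R a s x 1 := by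
  have key : ∀ x, 1 ≤ x → x ≤ 2 * a →
      (x % 2 = 1 → R a s x 1) ∧ (x % 2 = 0 → R a s x 2) := by
    intro x
    induction x using Nat.strong_induction_on with
    | _ x ih =>
      intro h1 h2
      constructor
      · intro hp
        rcases eq_or_lt_of_le h1 with h | h
        · exact h ▸ R.refl ha (by omega) (by omega)
        · have h3 : 3 ≤ x := by omega
          exact (desc_top ha h3 h2).trans
            (((ih (x - 2) (by omega)) (by omega) (by omega)).1 (by omega))
      · intro hp
        rcases Nat.lt_or_ge x 3 with h | h
        · have : x = 2 := by omega
          exact this ▸ R.refl ha (by omega) (by omega)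
        · exact (desc_top ha h h2).trans
            (((ih (x - 2) (by omega)) (by omega) (by omega)).2 (by omega))
  have two_to_one : R a s 2 1 := by
    refine (mA (s := s) ha (by omega) (by omega) rfl).trans ?_
    exact ((key (2 * a + 1 - 2) (by omega) (by omega)).1 (by omega))
  intro x h1 h2
  rcases Nat.mod_two_eq_zero_or_one x with h | h
  · exact ((key x h1 h2).2 h).trans two_to_one
  · exact (key x h1 h2).1 h

/-- All of `[1, 4a + 2s]` connects to `1`. -/
lemma mid_to_one (ha : 2 ≤ a) : ∀ x, 1 ≤ x → x ≤ 4 * a + 2 * s → R a s x 1 := by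
  intro x
  induction x using Nat.strong_induction_on with
  | _ x ih =>
    intro h1 h2
    rcases Nat.lt_or_ge x (2 * a + 1) with h | h
    · exact small_to_one ha x h1 (by omega)
    · rcases Nat.lt_or_ge x (4 * a + 1) with h' | h'
      · exact (mC ha (by omega) (by omega) rfl).trans
          (small_to_one ha _ (by omega) (by omega))
      · exact (desc_mid ha h' h2).trans (ih (x - 2) (by omega) (by omega) (by omega))

/-- Every point connects to `1`. -/
lemma all_to_one (ha : 2 ≤ a) (hs : 1 ≤ s) :
    ∀ x, 1 ≤ x → x ≤ 8 * a - 2 + 2 * s → R a s x 1 := by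
  intro x h1 h2
  rcases Nat.lt_or_ge x (4 * a + 2 * s + 1) with h | h
  · exact mid_to_one ha x h1 (by omega)
  · exact (mL ha h1 h2 rfl).trans (mid_to_one ha _ (by omega) (by omega))

end FourFam

/-- For α̃ ≥ 2 and α* ≥ 1, the bi-rainbow meander RM(α̃, α̃−1, α*, 2α̃) is connected. -/
theorem four_family_connected (a s : ℕ) (ha : 2 ≤ a) (hs : 1 ≤ s) :
    Z [a, a - 1, s, 2 * a] = 1 := by
  have hsum : ([a, a - 1, s, 2 * a] : List ℕ).sum = 4 * a - 1 + s := FourFam.sum_l ha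
  have h1 : (1 : ℕ) ≤ 1 ∧ 1 ≤ 2 * ([a, a - 1, s, 2 * a] : List ℕ).sum := ⟨le_refl 1, by omega⟩
  have key : ∀ x : {k : ℕ // 1 ≤ k ∧ k ≤ 2 * ([a, a - 1, s, 2 * a] : List ℕ).sum},
      Relation.EqvGen
        (fun u v : {k : ℕ // 1 ≤ k ∧ k ≤ 2 * ([a, a - 1, s, 2 * a] : List ℕ).sum} =>
          meanderRel [a, a - 1, s, 2 * a] u.1 v.1) x ⟨1, h1⟩ := by
    intro x
    obtain ⟨hx, hy, hE⟩ := FourFam.all_to_one ha hs x.1 x.2.1 (by omega)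
    exact hE
  rw [Z, Nat.card_eq_one_iff_unique]
  constructor
  · constructor
    intro q q'
    refine Quotient.inductionOn₂ q q' (fun x y => Quotient.sound ?_)
    exact (key x).trans _ _ _ ((key y).symm _ _)
  · exact ⟨Quotient.mk _ ⟨1, h1⟩⟩
end
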